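/- arXiv:hep-th/9807234 — 6 statements merged into one kernel-verified Lean document; each statement's English description precedes it below -/
import Mathlib

section
/- Suppose the order on ι is adapted to the subset A ⊆ ι. If Ψ₁, Ψ₂ ∈ V satisfy Γ Ψ₁ = 0 and Γ Ψ₂ = 0 for every Γ ∈ K, and the b-coordinates of Ψ₁ and Ψ₂ agree at every index of the ordering kernel ι \ A, then Ψ₁ = Ψ₂. -/
/-!
If `Ψ₁ ≠ Ψ₂`, let `X₀` be the least index at which the coordinates of `Ψ = Ψ₁ - Ψ₂` are
nonzero. It lies in `A`, so some `φ ∘ Γ` with `Γ ∈ K` kills every basis vector above `X₀` but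
not `b X₀`; hence `0 = φ (Γ Ψ) = (b.repr Ψ X₀) * φ (Γ (b X₀)) ≠ 0`.
-/

namespace Module.Basis

variable {R M N ι : Type*} [LinearOrder ι]
  [Semiring R] [AddCommMonoid M] [Module R M] [AddCommMonoid N] [Module R N]

def OrderAdapted (b : Basis ι R M) (K : Set (M →ₗ[R] N)) (A : Set ι) : Prop :=
  ∀ X₀ ∈ A, ∃ Γ ∈ K, ∃ φ : N →ₗ[R] R,
    φ (Γ (b X₀)) ≠ 0 ∧ ∀ Y : ι, X₀ < Y → φ (Γ (b Y)) = 0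

theorem map_eq_repr_smul_of_repr_lt_eq_zero (b : Basis ι R M) (f : M →ₗ[R] N)
    {v : M} {X₀ : ι} (hv : ∀ i < X₀, b.repr v i = 0) (hf : ∀ Y, X₀ < Y → f (b Y) = 0) :
    f v = b.repr v X₀ • f (b X₀) := by
  conv_lhs => rw [← b.linearCombination_repr v]
  rw [Finsupp.apply_linearCombination, Finsupp.linearCombination_apply]
  refine Finsupp.sum_eq_single X₀ (fun i _ hi => ?_) (fun _ => zero_smul R _)
  rcases hi.lt_or_gt with hlt | hgt
  · rw [hv i hlt, zero_smul]
  · rw [Function.comp_apply, hf i hgt, smul_zero]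

theorem eq_zero_of_orderAdapted [NoZeroDivisors R] {b : Basis ι R M} {K : Set (M →ₗ[R] N)}
    {A : Set ι} (hadapt : b.OrderAdapted K A) {Ψ : M} (hΨ : ∀ Γ ∈ K, Γ Ψ = 0)
    (hcoef : ∀ i ∉ A, b.repr Ψ i = 0) : Ψ = 0 := by
  by_contra hne
  have hsupp : (b.repr Ψ).support.Nonempty := by simpa using hne
  set X₀ := (b.repr Ψ).support.min' hsupp
  have hX₀ : b.repr Ψ X₀ ≠ 0 := Finsupp.mem_support_iff.mp (Finset.min'_mem _ hsupp)
  have hbelow : ∀ i < X₀, b.repr Ψ i = 0 := fun i hi =>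
    Finsupp.notMem_support_iff.mp fun hmem => (Finset.min'_le _ i hmem).not_gt hi
  obtain ⟨Γ, hΓK, φ, hφ, hφΓ⟩ := hadapt X₀ (not_not.mp fun hA => hX₀ (hcoef X₀ hA))
  have key := b.map_eq_repr_smul_of_repr_lt_eq_zero (φ ∘ₗ Γ) hbelow hφΓ
  simp only [LinearMap.comp_apply, hΨ Γ hΓK, map_zero, smul_eq_mul] at key
  exact mul_ne_zero hX₀ hφ key.symm

end Module.Basis

/-- If the order on `ι` is adapted to `A ⊆ ι`, and `Ψ₁, Ψ₂` are
annihilated by every operator of `K` and their `b`-coordinates agree on the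
ordering kernel `ι \ A`, then `Ψ₁ = Ψ₂`. -/
theorem adapted_ordering_kernel_determines
    {F V W : Type*} [Field F] [AddCommGroup V] [Module F V]
    [AddCommGroup W] [Module F W] {ι : Type*} [LinearOrder ι]
    (b : Module.Basis ι F V) (K : Set (V →ₗ[F] W)) (A : Set ι)
    (hadapt : ∀ X₀ ∈ A, ∃ Γ ∈ K, ∃ φ : W →ₗ[F] F,
      φ (Γ (b X₀)) ≠ 0 ∧ ∀ Y : ι, X₀ < Y → φ (Γ (b Y)) = 0)
    (Ψ₁ Ψ₂ : V)
    (h₁ : ∀ Γ ∈ K, Γ Ψ₁ = 0) (h₂ : ∀ Γ ∈ K, Γ Ψ₂ = 0)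
    (hcoef : ∀ i ∉ A, b.repr Ψ₁ i = b.repr Ψ₂ i) :
    Ψ₁ = Ψ₂ := by
  refine sub_eq_zero.mp
    (Module.Basis.eq_zero_of_orderAdapted hadapt (fun Γ hΓ => ?_) fun i hi => ?_)
  · rw [map_sub, h₁ Γ hΓ, h₂ Γ hΓ, sub_zero]
  · rw [map_sub, Finsupp.sub_apply, hcoef i hi, sub_self]
end

section
/- Suppose the order on ι is adapted to A = ι, i.e. the ordering kernel is empty. Then every Ψ ∈ V with Γ Ψ = 0 for all Γ ∈ K is zero; in particular there are no nonzero vectors annihilated by all operators of K. -/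
/-!
Write `Ψ` in the basis and let `X₀` be the least index in its support. Adaptedness at `X₀` gives
`Γ ∈ K` and `φ` such that `φ ∘ Γ` kills every basis vector above `X₀` but not `b X₀`; hence
`φ (Γ Ψ)` is the nonzero leading coefficient of `Ψ` times `φ (Γ (b X₀)) ≠ 0`, so `Γ Ψ ≠ 0`.
-/

namespace Module.Basis

variable {ι R M : Type*} [LinearOrder ι] [Semiring R] [AddCommMonoid M] [Module R M]

theorem apply_eq_repr_mul_of_apply_eq_zero_of_lt (b : Basis ι R M) (f : M →ₗ[R] R) {v : M}
    {i₀ : ι} (hv : ∀ i ∈ (b.repr v).support, i₀ ≤ i) (hf : ∀ i, i₀ < i → f (b i) = 0) :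
    f v = b.repr v i₀ * f (b i₀) := by
  conv_lhs => rw [← b.linearCombination_repr v]
  rw [Finsupp.linearCombination_apply, map_finsuppSum]
  refine (Finsupp.sum_eq_single i₀ (fun i hi hne => ?_) (fun _ => by simp)).trans (by simp)
  rw [map_smul, hf i ((hv i (Finsupp.mem_support_iff.mpr hi)).lt_of_ne' hne), smul_zero]

end Module.Basis

/-- If the order on `ι` is adapted to `A = ι` (empty ordering
kernel), then every vector annihilated by all operators of `K` is zero. -/
theorem adapted_ordering_empty_kernel_no_singular
    {F V W : Type*} [Field F] [AddCommGroup V] [Module F V]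
    [AddCommGroup W] [Module F W] {ι : Type*} [LinearOrder ι]
    (b : Module.Basis ι F V) (K : Set (V →ₗ[F] W))
    (hadapt : ∀ X₀ : ι, ∃ Γ ∈ K, ∃ φ : W →ₗ[F] F,
      φ (Γ (b X₀)) ≠ 0 ∧ ∀ Y : ι, X₀ < Y → φ (Γ (b Y)) = 0) :
    ∀ Ψ : V, (∀ Γ ∈ K, Γ Ψ = 0) → Ψ = 0 := by
  intro Ψ hΨ
  by_contra hne
  have hsupp : (b.repr Ψ).support.Nonempty := by simpa using hne
  set X₀ := (b.repr Ψ).support.min' hsupp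
  obtain ⟨Γ, hΓ, φ, hφX₀, hφ⟩ := hadapt X₀
  have hlead : b.repr Ψ X₀ ≠ 0 := Finsupp.mem_support_iff.mp (Finset.min'_mem _ hsupp)
  have hexpand := b.apply_eq_repr_mul_of_apply_eq_zero_of_lt (φ ∘ₗ Γ)
    (fun Y hY => Finset.min'_le _ Y hY) hφ
  rw [LinearMap.comp_apply, hΨ Γ hΓ, map_zero] at hexpand
  exact mul_ne_zero hlead hφX₀ hexpand.symm
end

section
/- Let X₀ = (λ, n₀) ∈ C_l with λ nonempty and smallest (rightmost) part m₁, and let X̃ = (λ', n₀+1), where λ' is λ with one copy of its smallest part m₁ removed. Then the coefficient of the basis vector b_{X̃} in the basis expansion of L_{m₁−1}·b_{X₀} is nonzero, whereas for every Y ∈ C_l with X₀ ≺_Vir Y and Y ≠ X₀ the coefficient of b_{X̃} in the basis expansion of L_{m₁−1}·b_Y is zero. Consequently ≺_Vir is adapted to C_l \ {((), l)}, with ordering kernel the single index ((), l) corresponding to the basis vector L_{−1}^l v. -/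
universe u

/-- Apply the operators `F (-m_I), …, F (-m_1)` (list read left to right) to `w`. -/
def listApplyVir {M : Type u} [AddCommGroup M] [Module ℂ M]
    (F : ℤ → Module.End ℂ M) (l : List ℕ) (w : M) : M :=
  l.foldr (fun a x => F (-(a : ℤ)) x) w

/-- Index of the standard basis of a Virasoro Verma module: a weakly decreasing
list `(m_I, …, m_1)` of integers `≥ 2` together with `n ∈ ℕ`. -/
def VirIndex : Type := {p : List ℕ × ℕ // p.1.Pairwise (· ≥ ·) ∧ ∀ x ∈ p.1, 2 ≤ x}

/-- Level of a basis index. -/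
def VirIndex.level (i : VirIndex) : ℕ := i.1.1.sum + i.1.2

/-- The index `((), n)` corresponding to the basis vector `L_{-1}^n v`. -/
def VirIndex.empty (n : ℕ) : VirIndex := ⟨([], n), List.Pairwise.nil, by simp⟩

/-- A Virasoro Verma module with central charge `c` and conformal weight `Δ`. -/
structure VirasoroVerma (c Δ : ℂ) (M : Type u) [AddCommGroup M] [Module ℂ M] where
  L : ℤ → Module.End ℂ M
  hcomm : ∀ m n : ℤ, L m * L n - L n * L m = ((m : ℂ) - (n : ℂ)) • L (m + n) +
    (if m + n = 0 then c / 12 * ((m : ℂ) ^ 3 - (m : ℂ)) else 0) • (1 : Module.End ℂ M)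
  v : M
  hv0 : L 0 v = Δ • v
  hvpos : ∀ m : ℤ, 1 ≤ m → L m v = 0
  b : Module.Basis VirIndex ℂ M
  hb : ∀ i : VirIndex, b i = listApplyVir L i.1.1 (((L (-1)) ^ i.1.2) v)

/-- The total order `≺_Vir` (strictly): `X ≺ Y` iff `X` has more `L_{-1}`'s,
or the same number and the parts of `X`, read from the right (smallest part
first), are lexicographically smaller at the first index where they differ. -/
def virLt (X Y : VirIndex) : Prop :=
  Y.1.2 < X.1.2 ∨ (X.1.2 = Y.1.2 ∧ List.Lex (· < ·) X.1.1.reverse Y.1.1.reverse)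

/-- `X̃`: remove one copy of the smallest (rightmost) part of `λ` and add one
`L_{-1}`. -/
def VirIndex.dropSmallest (i : VirIndex) : VirIndex :=
  ⟨(i.1.1.dropLast, i.1.2 + 1),
    List.Pairwise.sublist (List.dropLast_sublist _) i.2.1,
    fun x hx => i.2.2 x ((List.dropLast_sublist _).subset hx)⟩


/-!
Let `F n` (`VirasoroVerma.filtration`) be the span of the basis vectors with at most `n` factors
`L_{-1}`. Straightening with `[L_{-a}, L_{-b}] = (b - a) L_{-a-b}` shows that `F n` is stable under
`L_{-a}` for `a ≥ 2`, that `L_{-1}` commutes with these modulo `F n`, and hence that `L_{-1}` and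
every `L_j` with `j ≥ 0` map `F n` into `F (n + 1)`. For a partition `λ` with smallest part
`m ≥ 2`, the only commutator of `L_{m-1}` that creates a new `L_{-1}` is
`[L_{m-1}, L_{-m}] = (2m - 1) L_{-1}`, so `L_{m-1} b_{(λ, n)} ≡ k (2m - 1) b_{(λ', n + 1)}` modulo
`F n`, where `k` is the multiplicity of `m` in `λ` and `λ'` is `λ` with one `m` removed.

As `b_{X̃}` has `n₀ + 1` factors `L_{-1}`, its coefficient can be read modulo `F n₀`. For `X₀` it is
`k (2m₁ - 1) ≠ 0`. If `Y` has fewer factors `L_{-1}`, then `L_{m₁-1} b_Y ∈ F n₀`. Otherwise the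
smallest part `g` of `Y` is at least `m₁`: if `g > m₁` no new `L_{-1}` is created, and if `g = m₁`
the leading term is a multiple of `b_{Ỹ} ≠ b_{X̃}`.
-/

lemma List.getLast_le_getLast_of_lex_reverse {α : Type*} [Preorder α] {l l' : List α}
    (hl : l ≠ []) (h : List.Lex (· < ·) l.reverse l'.reverse) :
    ∃ hl' : l' ≠ [], l.getLast hl ≤ l'.getLast hl' := by
  obtain ⟨t, x, rfl⟩ := (List.eq_nil_or_concat' l).resolve_left hl
  obtain rfl | ⟨t', y, rfl⟩ := List.eq_nil_or_concat' l'
  · rw [List.reverse_nil, List.reverse_concat] at h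
    cases h
  refine ⟨by simp, ?_⟩
  rw [List.reverse_concat, List.reverse_concat] at h
  simp only [List.getLast_append_singleton]
  cases h with
  | cons => exact le_rfl
  | rel hxy => exact hxy.le

lemma VirIndex.eq_of_dropSmallest_eq {X Y : VirIndex} (hX : X.1.1 ≠ []) (hY : Y.1.1 ≠ [])
    (hlast : X.1.1.getLast hX = Y.1.1.getLast hY) (h : X.dropSmallest = Y.dropSmallest) :
    X = Y := by
  have h1 : X.1.1.dropLast = Y.1.1.dropLast := congrArg (fun Z : VirIndex => Z.1.1) h
  have h2 : X.1.2 + 1 = Y.1.2 + 1 := congrArg (fun Z : VirIndex => Z.1.2) h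
  refine Subtype.ext (Prod.ext ?_ (by omega))
  rw [← List.dropLast_append_getLast hX, ← List.dropLast_append_getLast hY, h1, hlast]

namespace VirasoroVerma

open Submodule

variable {c Δ : ℂ} {M : Type u} [AddCommGroup M] [Module ℂ M] (V : VirasoroVerma c Δ M)

def word (q : List ℕ) (n : ℕ) : M := listApplyVir V.L q ((V.L (-1) ^ n) V.v)

def filtration (n : ℕ) : Submodule ℂ M := span ℂ (V.b '' {Z | Z.1.2 ≤ n})

variable {V}

lemma word_cons (a : ℕ) (q : List ℕ) (n : ℕ) :
    V.word (a :: q) n = V.L (-a) (V.word q n) := rfl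

lemma word_nil_zero : V.word [] 0 = V.v := by simp [word, listApplyVir]

lemma word_nil_succ (n : ℕ) : V.word [] (n + 1) = V.L (-1) (V.word [] n) := by
  simp [word, listApplyVir, pow_succ', Module.End.mul_apply]

lemma b_eq_word (Z : VirIndex) : V.b Z = V.word Z.1.1 Z.1.2 := V.hb Z

lemma L_comm_apply (m n : ℤ) (x : M) :
    V.L m (V.L n x) = V.L n (V.L m x) + ((m : ℂ) - n) • V.L (m + n) x +
      (if m + n = 0 then c / 12 * ((m : ℂ) ^ 3 - m) else 0) • x := by
  have h := congrArg (· x) (V.hcomm m n)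
  simp only [LinearMap.sub_apply, Module.End.mul_apply, LinearMap.add_apply,
    LinearMap.smul_apply, Module.End.one_apply] at h
  rw [add_assoc, ← h, add_sub_cancel]

lemma L_comm_apply_of_add_ne_zero {m n : ℤ} (h : m + n ≠ 0) (x : M) :
    V.L m (V.L n x) = V.L n (V.L m x) + ((m : ℂ) - n) • V.L (m + n) x := by
  rw [L_comm_apply, if_neg h, zero_smul, add_zero]

lemma word_mem_span_of_pairwise {q : List ℕ} (hq : q.Pairwise (· ≥ ·)) (hq2 : ∀ x ∈ q, 2 ≤ x)
    (n : ℕ) : V.word q n ∈ span ℂ (V.b '' {W | W.1.2 = n ∧ W.1.1.sum = q.sum}) :=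
  subset_span ⟨⟨(q, n), hq, hq2⟩, ⟨rfl, rfl⟩, V.hb _⟩

theorem L_neg_word_mem_span {a : ℕ} (ha : 2 ≤ a) {q : List ℕ} (hq : q.Pairwise (· ≥ ·))
    (hq2 : ∀ x ∈ q, 2 ≤ x) (n : ℕ) :
    V.L (-a) (V.word q n) ∈ span ℂ (V.b '' {W | W.1.2 = n ∧ W.1.1.sum = a + q.sum}) := by
  -- Insertion of `a` into a sorted word. For `b :: q` with `a < b`, the words making up
  -- `L_{-a}` applied to the word `q` have sum `a + q.sum < (b :: q).sum`: the recursion terminates.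
  match q, hq, hq2 with
  | [], _, _ =>
    rw [← word_cons]
    simpa using V.word_mem_span_of_pairwise (q := [a]) (by simp) (by simpa using ha) n
  | b :: q, hq, hq2 =>
    rw [List.pairwise_cons] at hq
    by_cases hba : b ≤ a
    · rw [← word_cons, ← List.sum_cons]
      refine V.word_mem_span_of_pairwise (List.pairwise_cons.2 ⟨?_, ?_⟩) ?_ n
      · simp only [List.mem_cons, forall_eq_or_imp]
        exact ⟨hba, fun x hx => (hq.1 x hx).trans hba⟩
      · exact List.pairwise_cons.2 hq
      · simpa [ha] using hq2
    · rw [not_le] at hba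
      have hb2 : 2 ≤ b := hq2 b (by simp)
      have hq2' : ∀ x ∈ q, 2 ≤ x := fun x hx => hq2 x (by simp [hx])
      rw [word_cons, L_comm_apply_of_add_ne_zero (by omega)]
      refine add_mem ?_ (smul_mem _ _ ?_)
      · have hrec := L_neg_word_mem_span ha hq.2 hq2' n
        refine mem_comap.1 ((span_le (p := comap (V.L (-b)) _)).2 ?_ hrec)
        rintro _ ⟨W, ⟨hWn, hWs⟩, rfl⟩
        have h := L_neg_word_mem_span hb2 W.2.1 W.2.2 W.1.2
        rw [hWn, show b + W.1.1.sum = a + (b :: q).sum by simp; omega] at h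
        simpa [b_eq_word, hWn] using h
      · rw [show -(a : ℤ) + -b = -((a + b : ℕ) : ℤ) by push_cast; ring, ← word_cons]
        rw [show a + (b :: q).sum = ((a + b) :: q).sum by simp; ring]
        refine V.word_mem_span_of_pairwise (List.pairwise_cons.2 ⟨?_, hq.2⟩) ?_ n
        · exact fun x hx => (hq.1 x hx).trans (by omega)
        · simpa using ⟨(by omega : 2 ≤ a + b), hq2'⟩
termination_by q.sum
decreasing_by all_goals simp only [List.sum_cons]; omega

lemma filtration_mono : Monotone V.filtration := fun _ _ h =>
  span_mono (Set.image_mono fun _ hZ => le_trans hZ h)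

lemma map_mem_of_mem_filtration {N : Type*} [AddCommGroup N] [Module ℂ N] {n : ℕ}
    {p : Submodule ℂ N} {f : M →ₗ[ℂ] N}
    (h : ∀ Z : VirIndex, Z.1.2 ≤ n → f (V.b Z) ∈ p) {x : M} (hx : x ∈ V.filtration n) :
    f x ∈ p :=
  (span_le (p := p.comap f)).2 (by rintro _ ⟨Z, hZ, rfl⟩; exact h Z hZ) hx

lemma L_mem_filtration_of_le_neg_two {j : ℤ} (hj : j ≤ -2) {n : ℕ} {x : M}
    (hx : x ∈ V.filtration n) : V.L j x ∈ V.filtration n := by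
  obtain ⟨a, rfl⟩ : ∃ a : ℕ, j = -a := ⟨(-j).toNat, by omega⟩
  refine map_mem_of_mem_filtration (f := V.L (-a)) (fun Z hZ => ?_) hx
  rw [b_eq_word]
  refine span_mono (Set.image_mono ?_) (L_neg_word_mem_span (by omega) Z.2.1 Z.2.2 Z.1.2)
  exact fun W hW => hW.1.trans_le hZ

lemma word_mem_filtration {q : List ℕ} (hq : ∀ x ∈ q, 2 ≤ x) (n : ℕ) :
    V.word q n ∈ V.filtration n := by
  induction q with
  | nil => exact subset_span ⟨VirIndex.empty n, le_refl n, V.hb _⟩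
  | cons a q ih =>
    have ha : 2 ≤ a := hq a (by simp)
    exact L_mem_filtration_of_le_neg_two (by omega) (ih fun x hx => hq x (by simp [hx]))

lemma L_neg_one_word_sub_mem {q : List ℕ} (hq : ∀ x ∈ q, 2 ≤ x) (n : ℕ) :
    V.L (-1) (V.word q n) - V.word q (n + 1) ∈ V.filtration n := by
  induction q with
  | nil => simp [word_nil_succ]
  | cons a q ih =>
    have ha : 2 ≤ a := hq a (by simp)
    have hq' : ∀ x ∈ q, 2 ≤ x := fun x hx => hq x (by simp [hx])
    rw [word_cons, word_cons, L_comm_apply_of_add_ne_zero (by omega), add_sub_right_comm, ← map_sub]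
    exact add_mem (L_mem_filtration_of_le_neg_two (by omega) (ih hq'))
      (smul_mem _ _ (L_mem_filtration_of_le_neg_two (by omega) (word_mem_filtration hq' n)))

lemma L_neg_one_mem_filtration {n : ℕ} {x : M} (hx : x ∈ V.filtration n) :
    V.L (-1) x ∈ V.filtration (n + 1) := by
  refine map_mem_of_mem_filtration (f := V.L (-1)) (fun Z hZ => ?_) hx
  rw [b_eq_word, ← sub_add_cancel (V.L (-1) _) (V.word Z.1.1 (Z.1.2 + 1))]
  exact add_mem (filtration_mono (by omega) (L_neg_one_word_sub_mem Z.2.2 _))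
    (filtration_mono (by omega) (word_mem_filtration Z.2.2 _))

lemma L_word_nil_mem_filtration {k : ℤ} (hk : 0 ≤ k) (n : ℕ) :
    V.L k (V.word [] n) ∈ V.filtration n := by
  have hw (n : ℕ) : V.word [] n ∈ V.filtration n := word_mem_filtration (by simp) n
  induction n generalizing k with
  | zero =>
    rw [word_nil_zero]
    rcases hk.eq_or_lt with rfl | hk
    · rw [V.hv0]
      exact smul_mem _ _ (word_nil_zero (V := V) ▸ hw 0)
    · rw [V.hvpos k (by omega)]
      exact zero_mem _
  | succ n ih =>
    rw [word_nil_succ, L_comm_apply]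
    refine add_mem (add_mem (L_neg_one_mem_filtration (ih hk)) (smul_mem _ _ ?_))
      (smul_mem _ _ (filtration_mono n.le_succ (hw n)))
    rcases hk.eq_or_lt with rfl | hk
    · rw [zero_add, ← word_nil_succ]
      exact hw (n + 1)
    · exact filtration_mono n.le_succ (ih (by omega))

lemma L_word_mem_filtration_succ {i : ℤ} (hi : -1 ≤ i) {q : List ℕ} (hq : ∀ x ∈ q, 2 ≤ x)
    (n : ℕ) : V.L i (V.word q n) ∈ V.filtration (n + 1) := by
  induction q generalizing i with
  | nil =>
    rcases hi.eq_or_lt with rfl | hi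
    · rw [← word_nil_succ]
      exact word_mem_filtration (by simp) _
    · exact filtration_mono n.le_succ (L_word_nil_mem_filtration (by omega) n)
  | cons a q ih =>
    have ha : 2 ≤ a := hq a (by simp)
    have hq' : ∀ x ∈ q, 2 ≤ x := fun x hx => hq x (by simp [hx])
    have hw : V.word q n ∈ V.filtration n := word_mem_filtration hq' n
    rw [word_cons, L_comm_apply]
    refine add_mem (add_mem (L_mem_filtration_of_le_neg_two (by omega) (ih hi hq'))
      (smul_mem _ _ ?_)) (smul_mem _ _ (filtration_mono n.le_succ hw))
    by_cases h : -1 ≤ i + -a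
    · exact ih h hq'
    · exact filtration_mono n.le_succ (L_mem_filtration_of_le_neg_two (by omega) hw)

lemma L_word_mem_filtration {k : ℤ} (hk : 0 ≤ k) {q : List ℕ} (hq : ∀ x ∈ q, k + 2 ≤ x)
    (n : ℕ) : V.L k (V.word q n) ∈ V.filtration n := by
  induction q with
  | nil => exact L_word_nil_mem_filtration hk n
  | cons a q ih =>
    have ha : k + 2 ≤ a := hq a (by simp)
    have hq' : ∀ x ∈ q, k + 2 ≤ x := fun x hx => hq x (by simp [hx])
    rw [word_cons, L_comm_apply_of_add_ne_zero (by omega)]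
    exact add_mem (L_mem_filtration_of_le_neg_two (by omega) (ih hq'))
      (smul_mem _ _ (L_mem_filtration_of_le_neg_two (by omega)
        (word_mem_filtration (fun x hx => by have := hq' x hx; omega) n)))

lemma L_sub_one_word_sub_mem {m : ℕ} (hm : 2 ≤ m) {μ : List ℕ} (hμ : μ.Pairwise (· ≥ ·))
    (hμm : ∀ x ∈ μ, m ≤ x) (n : ℕ) :
    V.L (m - 1) (V.word (μ ++ [m]) n) -
      ((μ.count m + 1 : ℂ) * (2 * m - 1)) • V.word μ (n + 1) ∈ V.filtration n := by
  induction μ with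
  | nil =>
    rw [List.nil_append, word_cons, L_comm_apply_of_add_ne_zero (by omega),
      show (m : ℤ) - 1 + -m = -1 by ring, ← word_nil_succ]
    convert L_mem_filtration_of_le_neg_two (j := -m) (by omega)
      (L_word_nil_mem_filtration (k := m - 1) (by omega) n) using 1
    rw [List.count_nil]
    push_cast
    module
  | cons a μ ih =>
    rw [List.pairwise_cons] at hμ
    have ham : m ≤ a := hμm a (by simp)
    have hμm' : ∀ x ∈ μ, m ≤ x := fun x hx => hμm x (by simp [hx])
    have h2 : ∀ x ∈ μ ++ [m], 2 ≤ x := by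
      simp only [List.mem_append, List.mem_singleton]
      rintro x (hx | rfl)
      exacts [hm.trans (hμm' x hx), hm]
    have hz : V.word (μ ++ [m]) n ∈ V.filtration n := word_mem_filtration h2 n
    have ih' := L_mem_filtration_of_le_neg_two (j := -a) (by omega) (ih hμ.2 hμm')
    rw [List.cons_append, word_cons, word_cons, L_comm_apply_of_add_ne_zero (by omega)]
    rcases ham.eq_or_lt with rfl | ham
    · have hrep : μ ++ [m] = m :: μ := by
        rw [List.eq_replicate_of_mem fun x hx => le_antisymm (hμ.1 x hx) (hμm' x hx),
          ← List.replicate_succ', List.replicate_succ]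
      have hmove := L_neg_one_word_sub_mem (V := V) h2 n
      rw [show V.word (μ ++ [m]) (n + 1) = V.L (-m) (V.word μ (n + 1)) by
        rw [hrep, word_cons]] at hmove
      rw [show (m : ℤ) - 1 + -m = -1 by ring]
      convert add_mem ih' (smul_mem _ (2 * m - 1 : ℂ) hmove) using 1
      rw [map_sub, map_smul, List.count_cons_self]
      push_cast
      module
    · convert add_mem ih' (smul_mem _ ((((m : ℤ) - 1 : ℤ) : ℂ) - ((-a : ℤ) : ℂ))
        (L_mem_filtration_of_le_neg_two (j := m - 1 + -a) (by omega) hz)) using 1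
      rw [map_sub, map_smul, List.count_cons_of_ne ham.ne']
      abel

lemma repr_eq_zero_of_mem_filtration {n : ℕ} {x : M} (hx : x ∈ V.filtration n) {Z : VirIndex}
    (hZ : n < Z.1.2) : V.b.repr x Z = 0 := by
  refine map_mem_of_mem_filtration (p := ⊥) (f := V.b.coord Z) (fun W hW => ?_) hx
  rw [mem_bot, Module.Basis.coord_apply, Module.Basis.repr_self]
  exact Finsupp.single_eq_of_ne (by rintro rfl; omega)

lemma repr_eq_single_of_sub_mem {n : ℕ} {x : M} {r : ℂ} {W : VirIndex}
    (hx : x - r • V.b W ∈ V.filtration n) {Z : VirIndex} (hZ : n < Z.1.2) :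
    V.b.repr x Z = Finsupp.single W r Z := by
  have h := repr_eq_zero_of_mem_filtration hx hZ
  rwa [map_sub, map_smul, Module.Basis.repr_self, Finsupp.smul_single_one, Finsupp.sub_apply,
    sub_eq_zero] at h

lemma L_getLast_sub_one_b_sub_mem (X : VirIndex) (hne : X.1.1 ≠ []) :
    V.L ((X.1.1.getLast hne : ℤ) - 1) (V.b X) -
      ((X.1.1.dropLast.count (X.1.1.getLast hne) + 1 : ℂ) * (2 * (X.1.1.getLast hne : ℂ) - 1)) •
        V.b X.dropSmallest ∈ V.filtration X.1.2 := by
  have hsplit := List.dropLast_append_getLast hne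
  have hp := X.2.1
  rw [← hsplit, List.pairwise_append] at hp
  have hbX : V.b X = V.word (X.1.1.dropLast ++ [X.1.1.getLast hne]) X.1.2 := by
    rw [hsplit, b_eq_word]
  rw [hbX, b_eq_word]
  exact L_sub_one_word_sub_mem (X.2.2 _ (List.getLast_mem hne)) hp.1
    (fun x hx => hp.2.2 x hx _ (List.mem_singleton_self _)) X.1.2

theorem repr_L_b_dropSmallest_ne_zero (X : VirIndex) (hne : X.1.1 ≠ []) :
    V.b.repr (V.L ((X.1.1.getLast hne : ℤ) - 1) (V.b X)) X.dropSmallest ≠ 0 := by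
  have hm : 2 ≤ X.1.1.getLast hne := X.2.2 _ (List.getLast_mem hne)
  rw [repr_eq_single_of_sub_mem (L_getLast_sub_one_b_sub_mem X hne) (Nat.lt_succ_self _),
    Finsupp.single_eq_same]
  refine mul_ne_zero (by norm_cast) fun h => ?_
  have h' : (2 * X.1.1.getLast hne : ℂ) = 1 := by linear_combination h
  norm_cast at h'
  omega

theorem repr_L_b_dropSmallest_eq_zero (X : VirIndex) (hne : X.1.1 ≠ []) {Y : VirIndex}
    (hXY : virLt X Y) (hYX : Y ≠ X) :
    V.b.repr (V.L ((X.1.1.getLast hne : ℤ) - 1) (V.b Y)) X.dropSmallest = 0 := by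
  have hm : 2 ≤ X.1.1.getLast hne := X.2.2 _ (List.getLast_mem hne)
  rcases hXY with hn | ⟨hn, hlex⟩
  · rw [b_eq_word]
    exact repr_eq_zero_of_mem_filtration
      (filtration_mono hn (L_word_mem_filtration_succ (by omega) Y.2.2 _)) (Nat.lt_succ_self _)
  obtain ⟨hY, hle⟩ := List.getLast_le_getLast_of_lex_reverse hne hlex
  rcases hle.eq_or_lt with heq | hlt
  · have h := L_getLast_sub_one_b_sub_mem (V := V) Y hY
    rw [← heq, ← hn] at h
    rw [repr_eq_single_of_sub_mem h (Nat.lt_succ_self _), Finsupp.single_eq_of_ne]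
    exact fun h => hYX (VirIndex.eq_of_dropSmallest_eq hY hne heq.symm h.symm)
  · rw [b_eq_word]
    refine repr_eq_zero_of_mem_filtration (L_word_mem_filtration (by omega) (fun x hx => ?_) _)
      (show Y.1.2 < X.1.2 + 1 by omega)
    have := Y.2.1.rel_getLast hx
    omega

end VirasoroVerma

theorem virasoro_ordering_adapted_general {c Δ : ℂ} {M : Type u} [AddCommGroup M] [Module ℂ M]
    (V : VirasoroVerma c Δ M) (l : ℕ) (X₀ : VirIndex)
    (hne : X₀.1.1 ≠ []) :
    (V.b.repr (V.L ((X₀.1.1.getLast hne : ℤ) - 1) (V.b X₀)) X₀.dropSmallest ≠ 0 ∧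
      ∀ Y : VirIndex, Y.level = l → virLt X₀ Y → Y ≠ X₀ →
        V.b.repr (V.L ((X₀.1.1.getLast hne : ℤ) - 1) (V.b Y)) X₀.dropSmallest = 0) ∧
    (∀ Z : VirIndex, Z.level = l → Z ≠ VirIndex.empty l →
      ∃ m : ℤ, 1 ≤ m ∧ ∃ W : VirIndex,
        V.b.repr (V.L m (V.b Z)) W ≠ 0 ∧
        ∀ Y : VirIndex, Y.level = l → virLt Z Y → Y ≠ Z →
          V.b.repr (V.L m (V.b Y)) W = 0) := by
  refine ⟨⟨V.repr_L_b_dropSmallest_ne_zero X₀ hne,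
    fun Y _ hXY hYX => V.repr_L_b_dropSmallest_eq_zero X₀ hne hXY hYX⟩, fun Z hZ hZe => ?_⟩
  have hZne : Z.1.1 ≠ [] := fun h =>
    hZe (Subtype.ext (Prod.ext h (show Z.1.2 = l by simpa [VirIndex.level, h] using hZ)))
  have hm : 2 ≤ Z.1.1.getLast hZne := Z.2.2 _ (List.getLast_mem hZne)
  exact ⟨_, by omega, Z.dropSmallest, V.repr_L_b_dropSmallest_ne_zero Z hZne,
    fun Y _ hZY hYZ => V.repr_L_b_dropSmallest_eq_zero Z hZne hZY hYZ⟩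

/-- for `X₀ = (λ, n₀) ∈ C_l` with `λ` nonempty with smallest part
`m₁`, the coefficient of `b_{X̃}` (where `X̃ = (λ', n₀+1)`, `λ'` being `λ` with
one copy of `m₁` removed) in `L_{m₁-1} · b_{X₀}` is nonzero, while it is zero
in `L_{m₁-1} · b_Y` for every level-`l` index `Y` with `X₀ ≺_Vir Y`, `Y ≠ X₀`.
Consequently `≺_Vir` is adapted to `C_l \ {((), l)}`, with ordering kernel the
single index `((), l)`. -/
theorem virasoro_ordering_adapted {c Δ : ℂ} {M : Type u} [AddCommGroup M] [Module ℂ M]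
    (V : VirasoroVerma c Δ M) (l : ℕ) (X₀ : VirIndex) (hlev : X₀.level = l)
    (hne : X₀.1.1 ≠ []) :
    (V.b.repr (V.L ((X₀.1.1.getLast hne : ℤ) - 1) (V.b X₀)) X₀.dropSmallest ≠ 0 ∧
      ∀ Y : VirIndex, Y.level = l → virLt X₀ Y → Y ≠ X₀ →
        V.b.repr (V.L ((X₀.1.1.getLast hne : ℤ) - 1) (V.b Y)) X₀.dropSmallest = 0) ∧
    (∀ Z : VirIndex, Z.level = l → Z ≠ VirIndex.empty l →
      ∃ m : ℤ, 1 ≤ m ∧ ∃ W : VirIndex,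
        V.b.repr (V.L m (V.b Z)) W ≠ 0 ∧
        ∀ Y : VirIndex, Y.level = l → virLt Z Y → Y ≠ Z →
          V.b.repr (V.L m (V.b Y)) W = 0) :=
  virasoro_ordering_adapted_general V l X₀ hne
end

section
/- Let l ≥ 1 and let Ψ₁, Ψ₂ ∈ M lie in the span of the level-l basis vectors {b_X : X ∈ C_l} and satisfy L_mΨ₁ = L_mΨ₂ = 0 for all m ≥ 1. If the coefficients of the basis vector L_{−1}^l v in the basis expansions of Ψ₁ and Ψ₂ are equal, then Ψ₁ = Ψ₂. -/
universe u

/-!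
Put `Ψ := Ψ₁ - Ψ₂`: a vector of level `l`, killed by all `L_m` with `m ≥ 1`, with no
`L_{-1}^l v` component. Filter `M` by the number of modes of the PBW monomials. Modulo
monomials with fewer modes the generators `L_{-n}` commute, and for `m ≥ 2` the operator
`L_{m-1}` acts on a monomial whose modes are all `≤ m` by lowering one mode `m` to `1`,
in all possible ways, with factor `2m - 1`. If `Ψ ≠ 0`, pick in its support an index `X`
with the most modes and, among those, with the largest top mode `m`; then `m ≥ 2`, since
`L_{-1}^l v` is the only level-`l` basis vector without a mode `≥ 2`. The coefficient of
`L_{m-1} Ψ` on the basis vector obtained from `X` by replacing one `m` by `1` receives a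
contribution from `X` alone, and it is nonzero, contradicting `L_{m-1} Ψ = 0`.
-/

namespace VirIndex

/-- The modes `(m_I, …, m_1, 1, …, 1)` of `b X = L_{-m_I} ⋯ L_{-m_1} L_{-1}^n v`. -/
def modes (X : VirIndex) : List ℕ := X.1.1 ++ List.replicate X.1.2 1

lemma one_le_of_mem_modes {X : VirIndex} {x : ℕ} (hx : x ∈ X.modes) : 1 ≤ x := by
  rcases List.mem_append.1 hx with h | h
  · exact (X.2.2 x h).trans' (by norm_num)
  · exact (List.eq_of_mem_replicate h).ge

lemma modes_pairwise_ge (X : VirIndex) : X.modes.Pairwise (· ≥ ·) := by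
  refine List.pairwise_append.2 ⟨X.2.1, List.pairwise_replicate.2 (Or.inr le_rfl), ?_⟩
  intro a ha b hb
  rw [List.eq_of_mem_replicate hb]
  exact one_le_of_mem_modes (List.mem_append_left _ ha)

lemma count_one_modes (X : VirIndex) : X.modes.count 1 = X.1.2 := by
  have : X.1.1.count 1 = 0 := List.count_eq_zero.2 fun h => by have := X.2.2 1 h; omega
  simp [modes, List.count_append, this]

lemma modes_injective : Function.Injective modes := by
  intro X Y h
  have hn : X.1.2 = Y.1.2 := by rw [← count_one_modes, h, count_one_modes]
  have hlam : X.1.1 = Y.1.1 := List.append_inj_left' h (by simp [hn])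
  exact Subtype.ext (Prod.ext hlam hn)

lemma eq_of_modes_perm {X Y : VirIndex} (h : X.modes.Perm Y.modes) : X = Y :=
  modes_injective (h.eq_of_pairwise' X.modes_pairwise_ge Y.modes_pairwise_ge)

lemma exists_modes_perm (s : List ℕ) (hs : ∀ x ∈ s, 1 ≤ x) : ∃ X : VirIndex, X.modes.Perm s := by
  have hsort := List.perm_insertionSort (· ≥ ·) (s.filter (2 ≤ ·))
  refine ⟨⟨((s.filter (2 ≤ ·)).insertionSort (· ≥ ·), s.count 1),
    List.pairwise_insertionSort _ _,
    fun x hx => of_decide_eq_true (List.mem_filter.1 (hsort.subset hx)).2⟩, ?_⟩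
  have hones : s.filter (fun x => !decide (2 ≤ x)) = List.replicate (s.count 1) 1 := by
    rw [← List.filter_eq]
    exact List.filter_congr fun x hx => by
      have := hs x hx; rw [Bool.not_eq_eq_eq_not, ← decide_not, decide_eq_decide]; omega
  exact ((hsort.append_right _).trans (by rw [← hones])).trans (List.filter_append_perm _ s)

lemma one_le_of_mem_cons_one_erase {X : VirIndex} {m x : ℕ} (hx : x ∈ 1 :: X.modes.erase m) :
    1 ≤ x :=
  (List.mem_cons.1 hx).elim Eq.ge fun h => one_le_of_mem_modes (List.mem_of_mem_erase h)

lemma eq_empty_of_fst_eq_nil {X : VirIndex} (h : X.1.1 = []) : X = empty X.level :=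
  Subtype.ext (Prod.ext h (by simp [level, empty, h]))

lemma le_headI_of_mem_modes {X : VirIndex} {x : ℕ} (hx : x ∈ X.modes) : x ≤ X.modes.headI := by
  have hsorted := X.modes_pairwise_ge
  cases h : X.modes with
  | nil => simp [h] at hx
  | cons a t =>
    rw [h] at hx hsorted
    rcases List.mem_cons.1 hx with rfl | hx
    · exact le_rfl
    · exact (List.pairwise_cons.1 hsorted).1 x hx

lemma two_le_headI_modes {X : VirIndex} (h : X.1.1 ≠ []) :
    2 ≤ X.modes.headI ∧ X.modes.headI ∈ X.modes := by
  obtain ⟨a, t, hat⟩ := List.exists_cons_of_ne_nil h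
  have hmodes : X.modes = a :: (t ++ List.replicate X.1.2 1) := by simp [modes, hat]
  rw [hmodes]
  exact ⟨X.2.2 a (by simp [hat]), List.mem_cons_self⟩

end VirIndex

namespace VirasoroVerma

open VirIndex

variable {c Δ : ℂ} {M : Type u} [AddCommGroup M] [Module ℂ M] (V : VirasoroVerma c Δ M)

def monomial (s : List ℕ) : M := listApplyVir V.L s V.v

@[simp] lemma monomial_nil : V.monomial [] = V.v := rfl

@[simp] lemma monomial_cons (a : ℕ) (s : List ℕ) :
    V.monomial (a :: s) = V.L (-a) (V.monomial s) := rfl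

lemma monomial_replicate_one (n : ℕ) : V.monomial (List.replicate n 1) = (V.L (-1) ^ n) V.v := by
  induction n with
  | zero => rfl
  | succ n ih => rw [List.replicate_succ, monomial_cons, ih, pow_succ', Module.End.mul_apply]; rfl

lemma monomial_append (p s : List ℕ) :
    V.monomial (p ++ s) = listApplyVir V.L p (V.monomial s) := by
  simp [monomial, listApplyVir, List.foldr_append]

lemma b_eq_monomial (X : VirIndex) : V.b X = V.monomial X.modes := by
  rw [V.hb, modes, monomial_append, monomial_replicate_one]

lemma L_L_apply (m n : ℤ) (w : M) :
    V.L m (V.L n w) = V.L n (V.L m w) + ((m : ℂ) - n) • V.L (m + n) w +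
      (if m + n = 0 then c / 12 * ((m : ℂ) ^ 3 - m) else 0) • w := by
  have h := congrArg (· w) (V.hcomm m n)
  simp only [LinearMap.sub_apply, Module.End.mul_apply, LinearMap.add_apply,
    LinearMap.smul_apply, Module.End.one_apply] at h
  rw [add_assoc, ← h, add_sub_cancel]

lemma L_zero_monomial (s : List ℕ) : V.L 0 (V.monomial s) = (Δ + s.sum) • V.monomial s := by
  induction s with
  | nil => simpa using V.hv0
  | cons a s ih =>
    rw [monomial_cons, L_L_apply, ih, zero_add, map_smul]
    rcases Nat.eq_zero_or_pos a with rfl | ha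
    · simp
    · rw [if_neg (by omega), List.sum_cons, Nat.cast_add]
      push_cast
      module

lemma monomial_append_swap (p t : List ℕ) (x y : ℕ) :
    V.monomial (p ++ x :: y :: t) =
      V.monomial (p ++ y :: x :: t) + ((y : ℂ) - x) • V.monomial (p ++ (x + y) :: t) := by
  induction p with
  | nil =>
    simp only [List.nil_append, monomial_cons]
    rw [L_L_apply, show -(x : ℤ) + -y = -((x + y : ℕ) : ℤ) by push_cast; ring]
    rcases Nat.eq_zero_or_pos (x + y) with hxy | hxy
    · obtain ⟨rfl, rfl⟩ : x = 0 ∧ y = 0 := by omega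
      simp
    · rw [if_neg (by omega)]
      push_cast
      module
  | cons a p ih => simp only [List.cons_append, monomial_cons, ih, map_add, map_smul]

/-- The PBW filtration, indexed so that `pbwFiltration 0 = ⊥`: this avoids truncated
subtraction when a statement lowers the number of modes by one. -/
def pbwFiltration (k : ℕ) : Submodule ℂ M :=
  Submodule.span ℂ (V.b '' {X | X.modes.length < k})

lemma pbwFiltration_mono : Monotone V.pbwFiltration :=
  fun _ _ h => Submodule.span_mono (Set.image_mono fun _ hX => lt_of_lt_of_le hX h)

lemma b_mem_pbwFiltration {X : VirIndex} {k : ℕ} (h : X.modes.length < k) :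
    V.b X ∈ V.pbwFiltration k :=
  Submodule.subset_span ⟨X, h, rfl⟩

lemma repr_eq_zero_of_mem_pbwFiltration {w : M} {k : ℕ} (hw : w ∈ V.pbwFiltration k)
    {Y : VirIndex} (hY : k ≤ Y.modes.length) : V.b.repr w Y = 0 :=
  Finsupp.notMem_support_iff.1 fun h => (V.b.mem_span_image.1 hw h).not_ge hY

lemma pbwFiltration_le_comap {k k' : ℕ} {f : Module.End ℂ M}
    (h : ∀ X : VirIndex, X.modes.length < k → f (V.b X) ∈ V.pbwFiltration k') :
    V.pbwFiltration k ≤ (V.pbwFiltration k').comap f :=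
  Submodule.span_le.2 <| Set.image_subset_iff.2 h

/-- A transposition of adjacent modes costs one monomial with a mode fewer, as
`[L_{-x}, L_{-y}] = (y - x) L_{-x-y}`. -/
lemma monomial_append_sub_mem_of_perm {s s' : List ℕ} (h : s.Perm s') (p : List ℕ)
    (hshort : ∀ t : List ℕ, t.length < (p ++ s).length →
      V.monomial t ∈ V.pbwFiltration (t.length + 1)) :
    V.monomial (p ++ s) - V.monomial (p ++ s') ∈ V.pbwFiltration (p ++ s).length := by
  induction h generalizing p with
  | nil => simp
  | cons x _ ih => simpa using ih (p ++ [x]) (by simpa using hshort)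
  | swap x y t =>
    have hmerge := hshort (p ++ (y + x) :: t) (by simp)
    have hlen : (p ++ (y + x) :: t).length + 1 = (p ++ y :: x :: t).length := by
      simp only [List.length_append, List.length_cons]
      omega
    rw [V.monomial_append_swap p t y x, add_sub_cancel_left, ← hlen]
    simpa using Submodule.neg_mem _ (Submodule.smul_mem _ ((x : ℂ) - y) hmerge)
  | @trans l₁ l₂ l₃ h₁ _ ih₁ ih₂ =>
    have hlen : (p ++ l₂).length = (p ++ l₁).length := by simp [h₁.length_eq]
    rw [← sub_add_sub_cancel _ (V.monomial (p ++ l₂))]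
    exact Submodule.add_mem _ (ih₁ p hshort) (hlen ▸ ih₂ p (hlen ▸ hshort))

lemma monomial_mem_pbwFiltration (s : List ℕ) :
    V.monomial s ∈ V.pbwFiltration (s.length + 1) := by
  have hshort (t : List ℕ) (_ : t.length < s.length) :
      V.monomial t ∈ V.pbwFiltration (t.length + 1) :=
    monomial_mem_pbwFiltration t
  have hperm {s' : List ℕ} (h : s.Perm s') :
      V.monomial s - V.monomial s' ∈ V.pbwFiltration (s.length + 1) :=
    V.pbwFiltration_mono (Nat.le_succ _) (V.monomial_append_sub_mem_of_perm h [] hshort)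
  by_cases h0 : 0 ∈ s
  · have hlen := List.length_erase_add_one h0
    have hL0 : V.monomial (0 :: s.erase 0) ∈ V.pbwFiltration (s.length + 1) := by
      rw [monomial_cons, Nat.cast_zero, neg_zero, L_zero_monomial]
      exact Submodule.smul_mem _ _
        (V.pbwFiltration_mono (by omega) (hshort (s.erase 0) (by omega)))
    simpa using Submodule.add_mem _ (hperm (List.perm_cons_erase h0)) hL0
  · obtain ⟨X, hX⟩ := exists_modes_perm s fun x hx =>
      Nat.one_le_iff_ne_zero.2 (ne_of_mem_of_not_mem hx h0)
    have hb := V.b_mem_pbwFiltration (k := s.length + 1) (by rw [hX.length_eq]; omega)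
    rw [b_eq_monomial] at hb
    simpa using Submodule.add_mem _ (hperm hX.symm) hb
termination_by s.length

lemma monomial_sub_mem_of_perm {s s' : List ℕ} (h : s.Perm s') :
    V.monomial s - V.monomial s' ∈ V.pbwFiltration s.length :=
  V.monomial_append_sub_mem_of_perm h [] fun t _ => V.monomial_mem_pbwFiltration t

lemma L_neg_mem_pbwFiltration (a : ℕ) {k : ℕ} {w : M} (hw : w ∈ V.pbwFiltration k) :
    V.L (-a) w ∈ V.pbwFiltration (k + 1) := by
  refine V.pbwFiltration_le_comap (fun X hX => ?_) hw
  rw [b_eq_monomial, ← monomial_cons]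
  exact V.pbwFiltration_mono (by simpa using hX) (V.monomial_mem_pbwFiltration _)

lemma L_natCast_monomial_mem (n : ℕ) (s : List ℕ) :
    V.L n (V.monomial s) ∈ V.pbwFiltration (s.length + 1) := by
  induction s generalizing n with
  | nil =>
    rcases Nat.eq_zero_or_pos n with rfl | hn
    · simpa [V.hv0] using Submodule.smul_mem _ Δ (V.monomial_mem_pbwFiltration [])
    · simp [V.hvpos n (by exact_mod_cast hn)]
  | cons a t ih =>
    have hmono := V.pbwFiltration_mono (Nat.le_succ (t.length + 1))
    rw [monomial_cons, L_L_apply]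
    refine Submodule.add_mem _ (Submodule.add_mem _ (V.L_neg_mem_pbwFiltration a (ih n))
      (Submodule.smul_mem _ _ ?_)) (Submodule.smul_mem _ _ (hmono (V.monomial_mem_pbwFiltration t)))
    rcases le_or_gt a n with han | han
    · rw [show (n : ℤ) + -a = ((n - a : ℕ) : ℤ) by omega]
      exact hmono (ih _)
    · rw [show (n : ℤ) + -a = -((a - n : ℕ) : ℤ) by omega, ← monomial_cons]
      exact V.monomial_mem_pbwFiltration ((a - n) :: t)

lemma L_natCast_mem_pbwFiltration (n : ℕ) {k : ℕ} {w : M} (hw : w ∈ V.pbwFiltration k) :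
    V.L n w ∈ V.pbwFiltration k := by
  refine V.pbwFiltration_le_comap (fun X hX => ?_) hw
  rw [b_eq_monomial]
  exact V.pbwFiltration_mono hX (V.L_natCast_monomial_mem n _)

lemma repr_monomial_of_length_eq {s : List ℕ} (hs : ∀ x ∈ s, 1 ≤ x) {Y : VirIndex}
    (hY : Y.modes.length = s.length) :
    V.b.repr (V.monomial s) Y = if Y.modes.Perm s then 1 else 0 := by
  classical
  obtain ⟨X, hX⟩ := exists_modes_perm s hs
  have hdiff := V.repr_eq_zero_of_mem_pbwFiltration (V.monomial_sub_mem_of_perm hX.symm) hY.ge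
  rw [map_sub, Finsupp.sub_apply, sub_eq_zero, ← b_eq_monomial, V.b.repr_self,
    Finsupp.single_apply] at hdiff
  rw [hdiff]
  exact if_congr ⟨fun h => h ▸ hX, fun h => eq_of_modes_perm (hX.trans h.symm)⟩ rfl rfl

/-- The part of `L_{m-1}` applied to a monomial with all modes `≤ m` that keeps the number of
modes: each mode `m` is lowered to `1`, with the factor `2m - 1` of
`[L_{m-1}, L_{-m}] = (2m - 1) L_{-1}`. -/
def leadingTerm (m : ℕ) (s : List ℕ) : M :=
  ((s.count m : ℂ) * (2 * m - 1)) • V.monomial (1 :: s.erase m)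

lemma L_neg_leadingTerm_sub_mem (m a : ℕ) (t : List ℕ) :
    V.L (-a) (V.leadingTerm m t) + (if a = m then (2 * m - 1 : ℂ) • V.monomial (1 :: t) else 0)
      - V.leadingTerm m (a :: t) ∈ V.pbwFiltration (t.length + 1) := by
  have hcount {u u' : List ℕ} (hu : m ∈ t → u.Perm u' ∧ u.length = t.length + 1) :
      ((t.count m : ℂ) * (2 * m - 1)) • (V.monomial u - V.monomial u')
        ∈ V.pbwFiltration (t.length + 1) := by
    by_cases hmt : m ∈ t
    · obtain ⟨hperm, hlen⟩ := hu hmt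
      exact Submodule.smul_mem _ _ (hlen ▸ V.monomial_sub_mem_of_perm hperm)
    · simp [List.count_eq_zero_of_not_mem hmt]
  unfold leadingTerm
  rw [map_smul, ← monomial_cons]
  by_cases ha : a = m
  · subst ha
    rw [if_pos rfl, List.count_cons_self, List.erase_cons_head]
    convert hcount (u := a :: 1 :: t.erase a) (u' := 1 :: t) fun hat =>
      ⟨(List.Perm.swap 1 a _).trans ((List.perm_cons_erase hat).symm.cons 1),
        by simp [← List.length_erase_add_one hat]⟩ using 1
    push_cast
    module
  · rw [if_neg ha, add_zero, List.count_cons_of_ne ha, List.erase_cons_tail (by simpa using ha),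
      ← smul_sub]
    exact hcount fun hmt => ⟨List.Perm.swap 1 a _, by simp [← List.length_erase_add_one hmt]⟩

lemma L_monomial_sub_leadingTerm_mem {m : ℕ} (hm : 2 ≤ m) {s : List ℕ} (hs : ∀ x ∈ s, x ≤ m) :
    V.L (m - 1 : ℤ) (V.monomial s) - V.leadingTerm m s ∈ V.pbwFiltration s.length := by
  induction s with
  | nil => simp [leadingTerm, V.hvpos (m - 1 : ℤ) (by omega)]
  | cons a t ih =>
    have hlower := V.L_neg_mem_pbwFiltration a (ih fun x hx => hs x (List.mem_cons_of_mem a hx))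
    set R : M := if a = m then (2 * m - 1 : ℂ) • V.monomial (1 :: t) else 0 with hR
    have hcomm : (((m - 1 : ℤ) : ℂ) - (-a : ℤ)) • V.L ((m - 1 : ℤ) + -a) (V.monomial t) - R
        ∈ V.pbwFiltration (t.length + 1) := by
      rcases (hs a List.mem_cons_self).eq_or_lt with rfl | ha
      · rw [show ((a : ℤ) - 1 + -a) = -((1 : ℕ) : ℤ) by ring, ← monomial_cons, hR, if_pos rfl,
          ← sub_smul]
        push_cast
        rw [show (a - 1 - -a - (2 * a - 1) : ℂ) = 0 by ring, zero_smul]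
        exact Submodule.zero_mem _
      · rw [show ((m : ℤ) - 1 + -a) = ((m - 1 - a : ℕ) : ℤ) by omega, hR, if_neg ha.ne, sub_zero]
        exact Submodule.smul_mem _ _ (V.L_natCast_monomial_mem _ t)
    rw [monomial_cons, L_L_apply, List.length_cons, add_sub_right_comm]
    refine Submodule.add_mem _ ?_ (Submodule.smul_mem _ _ (V.monomial_mem_pbwFiltration t))
    convert Submodule.add_mem _ (Submodule.add_mem _ hlower
      (V.L_neg_leadingTerm_sub_mem m a t)) hcomm using 1
    rw [map_sub]
    abel

lemma repr_L_b_of_length_eq {m : ℕ} (hm : 2 ≤ m) {X Y : VirIndex} (hX : ∀ x ∈ X.modes, x ≤ m)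
    (hY : Y.modes.length = X.modes.length) :
    V.b.repr (V.L (m - 1 : ℤ) (V.b X)) Y =
      if Y.modes.Perm (1 :: X.modes.erase m) then (X.modes.count m : ℂ) * (2 * m - 1) else 0 := by
  have hlead := V.repr_eq_zero_of_mem_pbwFiltration (V.L_monomial_sub_leadingTerm_mem hm hX) hY.ge
  rw [map_sub, Finsupp.sub_apply, sub_eq_zero] at hlead
  rw [b_eq_monomial, hlead, leadingTerm, map_smul, Finsupp.smul_apply, smul_eq_mul]
  by_cases hmX : m ∈ X.modes
  · rw [V.repr_monomial_of_length_eq (fun _ => one_le_of_mem_cons_one_erase)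
      (by rw [hY, List.length_cons, List.length_erase_add_one hmX])]
    split_ifs <;> simp
  · simp [List.count_eq_zero_of_not_mem hmX]

lemma repr_L_eq_of_maximal {Ψ : M} {m : ℕ} (hm : 2 ≤ m) {Xs Y : VirIndex}
    (hXs : Xs ∈ (V.b.repr Ψ).support) (hmXs : m ∈ Xs.modes)
    (hmax : ∀ X ∈ (V.b.repr Ψ).support, X.modes.length < Xs.modes.length ∨
      X.modes.length = Xs.modes.length ∧ ∀ x ∈ X.modes, x ≤ m)
    (hY : Y.modes.Perm (1 :: Xs.modes.erase m)) :
    V.b.repr (V.L (m - 1 : ℤ) Ψ) Y = V.b.repr Ψ Xs * ((Xs.modes.count m : ℂ) * (2 * m - 1)) := by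
  classical
  have hYlen : Y.modes.length = Xs.modes.length := by
    rw [hY.length_eq, List.length_cons, List.length_erase_add_one hmXs]
  have hterm (X : VirIndex) (hX : X ∈ (V.b.repr Ψ).support) :
      V.b.repr (V.L (m - 1 : ℤ) (V.b X)) Y =
        if X = Xs then (Xs.modes.count m : ℂ) * (2 * m - 1) else 0 := by
    rcases hmax X hX with hlt | ⟨hlen, hle⟩
    · rw [if_neg (by rintro rfl; exact lt_irrefl _ hlt),
        show (m : ℤ) - 1 = ((m - 1 : ℕ) : ℤ) by omega]
      exact V.repr_eq_zero_of_mem_pbwFiltration (V.L_natCast_mem_pbwFiltration _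
        (V.b_mem_pbwFiltration (X := X) (Nat.lt_succ_self _))) (by omega)
    · rw [V.repr_L_b_of_length_eq hm hle (hYlen.trans hlen.symm)]
      by_cases hXXs : X = Xs
      · rw [if_pos (hXXs ▸ hY), if_pos hXXs, hXXs]
      rw [if_neg hXXs, ite_eq_right_iff]
      intro hYX
      by_cases hmX : m ∈ X.modes
      · refine absurd (eq_of_modes_perm ?_) hXXs
        exact (List.perm_cons_erase hmX).trans
          ((((hYX.symm.trans hY).cons_inv).cons m).trans (List.perm_cons_erase hmXs).symm)
      · simp [List.count_eq_zero_of_not_mem hmX]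
  conv_lhs => rw [← V.b.linearCombination_repr Ψ, Finsupp.apply_linearCombination,
    Finsupp.linearCombination_apply, map_finsuppSum, Finsupp.sum]
  rw [Finsupp.finsetSum_apply]
  simp_rw [map_smul, Finsupp.smul_apply, Function.comp_apply, smul_eq_mul]
  rw [Finset.sum_congr rfl fun X hX => by rw [hterm X hX, mul_ite, mul_zero],
    Finset.sum_ite_eq' _ _ _, if_pos hXs]

theorem eq_zero_of_forall_L_eq_zero {l : ℕ} {Ψ : M}
    (hmem : Ψ ∈ Submodule.span ℂ (V.b '' {i : VirIndex | i.level = l}))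
    (hann : ∀ m : ℤ, 1 ≤ m → V.L m Ψ = 0) (hcoef : V.b.repr Ψ (VirIndex.empty l) = 0) :
    Ψ = 0 := by
  by_contra hΨ
  have hsupp : (V.b.repr Ψ).support.Nonempty :=
    Finsupp.support_nonempty_iff.2 (V.b.repr.map_ne_zero_iff.2 hΨ)
  have hlam (X : VirIndex) (hX : X ∈ (V.b.repr Ψ).support) : X.1.1 ≠ [] := fun hnil => by
    have hlevel : X.level = l := V.b.mem_span_image.1 hmem hX
    rw [eq_empty_of_fst_eq_nil hnil, hlevel] at hX
    exact Finsupp.mem_support_iff.1 hX hcoef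
  obtain ⟨Xs, hXs, hmax⟩ := (V.b.repr Ψ).support.exists_max_image
    (fun X => toLex (X.modes.length, X.modes.headI)) hsupp
  obtain ⟨hm, hmXs⟩ := two_le_headI_modes (hlam Xs hXs)
  obtain ⟨Y, hY⟩ := exists_modes_perm (1 :: Xs.modes.erase Xs.modes.headI)
    fun _ => one_le_of_mem_cons_one_erase
  have hcoeff := V.repr_L_eq_of_maximal hm hXs hmXs (fun X hX => by
    refine (Prod.Lex.toLex_le_toLex.1 (hmax X hX)).imp_right (And.imp_right ?_)
    exact fun hhead x hx => (le_headI_of_mem_modes hx).trans hhead) hY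
  rw [hann _ (by omega), map_zero, Finsupp.zero_apply] at hcoeff
  have h2m : (2 * Xs.modes.headI - 1 : ℂ) ≠ 0 := by
    rw [sub_ne_zero]
    exact_mod_cast (by omega : 2 * Xs.modes.headI ≠ 1)
  exact mul_ne_zero (Finsupp.mem_support_iff.1 hXs)
    (mul_ne_zero (Nat.cast_ne_zero.2 (List.count_pos_iff.2 hmXs).ne') h2m) hcoeff.symm

end VirasoroVerma

theorem virasoro_kernel_coefficient_determines_general {c Δ : ℂ} {M : Type u}
    [AddCommGroup M] [Module ℂ M] (V : VirasoroVerma c Δ M) (l : ℕ)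
    (Ψ₁ Ψ₂ : M)
    (hmem₁ : Ψ₁ ∈ Submodule.span ℂ (V.b '' {i : VirIndex | i.level = l}))
    (hmem₂ : Ψ₂ ∈ Submodule.span ℂ (V.b '' {i : VirIndex | i.level = l}))
    (hann₁ : ∀ m : ℤ, 1 ≤ m → V.L m Ψ₁ = 0)
    (hann₂ : ∀ m : ℤ, 1 ≤ m → V.L m Ψ₂ = 0)
    (hcoef : V.b.repr Ψ₁ (VirIndex.empty l) = V.b.repr Ψ₂ (VirIndex.empty l)) :
    Ψ₁ = Ψ₂ :=
  sub_eq_zero.1 <| V.eq_zero_of_forall_L_eq_zero (Submodule.sub_mem _ hmem₁ hmem₂)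
    (fun m hm => by rw [map_sub, hann₁ m hm, hann₂ m hm, sub_zero])
    (by rw [map_sub, Finsupp.sub_apply, hcoef, sub_self])

/-- two vectors in the span of the level-`l` basis vectors which
are annihilated by all `L_m`, `m ≥ 1`, and whose coefficients on `L_{-1}^l v`
agree, are equal. -/
theorem virasoro_kernel_coefficient_determines {c Δ : ℂ} {M : Type u}
    [AddCommGroup M] [Module ℂ M] (V : VirasoroVerma c Δ M) (l : ℕ) (hl : 1 ≤ l)
    (Ψ₁ Ψ₂ : M)
    (hmem₁ : Ψ₁ ∈ Submodule.span ℂ (V.b '' {i : VirIndex | i.level = l}))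
    (hmem₂ : Ψ₂ ∈ Submodule.span ℂ (V.b '' {i : VirIndex | i.level = l}))
    (hann₁ : ∀ m : ℤ, 1 ≤ m → V.L m Ψ₁ = 0)
    (hann₂ : ∀ m : ℤ, 1 ≤ m → V.L m Ψ₂ = 0)
    (hcoef : V.b.repr Ψ₁ (VirIndex.empty l) = V.b.repr Ψ₂ (VirIndex.empty l)) :
    Ψ₁ = Ψ₂ :=
  virasoro_kernel_coefficient_determines_general V l Ψ₁ Ψ₂ hmem₁ hmem₂ hann₁ hann₂ hcoef
end

section
/- Let M = V^{GQ}_{0,q,c} be a chiral Verma module (any c ∈ ℂ). (i) Every Ψ ∈ M with L_0Ψ = 0 is proportional to v. (ii) Consequently, every eigenvector Ψ of L_0 in M that is annihilated by the positive operators and satisfies G_0Ψ = 0 and Q_0Ψ = 0 is proportional to v; in particular chiral Verma modules contain no chiral singular vectors. -/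
universe u

/-- A representation of the topological N=2 superconformal algebra with
central charge `c` on the complex vector space `M`. -/
structure TopN2 (c : ℂ) (M : Type u) [AddCommGroup M] [Module ℂ M] where
  L : ℤ → Module.End ℂ M
  H : ℤ → Module.End ℂ M
  G : ℤ → Module.End ℂ M
  Q : ℤ → Module.End ℂ M
  hLL : ∀ m n : ℤ, L m * L n - L n * L m = ((m : ℂ) - (n : ℂ)) • L (m + n)
  hHH : ∀ m n : ℤ, H m * H n - H n * H m =
    (if m + n = 0 then c / 3 * (m : ℂ) else 0) • (1 : Module.End ℂ M)
  hLG : ∀ m n : ℤ, L m * G n - G n * L m = ((m : ℂ) - (n : ℂ)) • G (m + n)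
  hHG : ∀ m n : ℤ, H m * G n - G n * H m = G (m + n)
  hLQ : ∀ m n : ℤ, L m * Q n - Q n * L m = (-(n : ℂ)) • Q (m + n)
  hHQ : ∀ m n : ℤ, H m * Q n - Q n * H m = -(Q (m + n))
  hLH : ∀ m n : ℤ, L m * H n - H n * L m = (-(n : ℂ)) • H (m + n) +
    (if m + n = 0 then c / 6 * ((m : ℂ) ^ 2 + (m : ℂ)) else 0) • (1 : Module.End ℂ M)
  hGQ : ∀ m n : ℤ, G m * Q n + Q n * G m = (2 : ℂ) • L (m + n) + (-2 * (n : ℂ)) • H (m + n) +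
    (if m + n = 0 then c / 3 * ((m : ℂ) ^ 2 + (m : ℂ)) else 0) • (1 : Module.End ℂ M)
  hGG : ∀ m n : ℤ, G m * G n + G n * G m = 0
  hQQ : ∀ m n : ℤ, Q m * Q n + Q n * Q m = 0

/-- `Ψ` is annihilated by the positive operators. -/
def TopN2.AnnPos {c : ℂ} {M : Type u} [AddCommGroup M] [Module ℂ M]
    (A : TopN2 c M) (Ψ : M) : Prop :=
  ∀ k : ℤ, 1 ≤ k → A.L k Ψ = 0 ∧ A.H k Ψ = 0 ∧ A.G k Ψ = 0 ∧ A.Q k Ψ = 0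

/-- Apply the operators `F (-a_j)` for the entries `a_j` of the list (read left
to right) to `w`. -/
def listApplyN2 {M : Type u} [AddCommGroup M] [Module ℂ M]
    (F : ℤ → Module.End ℂ M) (l : List ℕ) (w : M) : M :=
  l.foldr (fun a x => F (-(a : ℤ)) x) w

/-- Apply `f` to `w` if `r = true`, corresponding to a factor `f^r`, `r ∈ {0,1}`. -/
def condApply {M : Type u} [AddCommGroup M] [Module ℂ M]
    (f : Module.End ℂ M) (r : Bool) (w : M) : M :=
  if r then f w else w

/-- Index of the standard basis of a chiral Verma module of the topological
N=2 algebra. -/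
structure ChiralIndex : Type where
  ls : List ℕ
  hs : List ℕ
  gs : List ℕ
  ps : List ℕ
  k : ℕ
  r1 : Bool
  r2 : Bool
  hls : ls.Pairwise (· ≥ ·)
  hls2 : ∀ x ∈ ls, 2 ≤ x
  hhs : hs.Pairwise (· ≥ ·)
  hhs2 : ∀ x ∈ hs, 1 ≤ x
  hgs : gs.Pairwise (· > ·)
  hgs2 : ∀ x ∈ gs, 2 ≤ x
  hps : ps.Pairwise (· > ·)
  hps2 : ∀ x ∈ ps, 2 ≤ x

/-- The basis vector
`L_{-l_a}···L_{-l_1} H_{-h_b}···H_{-h_1} G_{-g_d}···G_{-g_1} Q_{-p_e}···Q_{-p_1}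
L_{-1}^k G_{-1}^{r_1} Q_{-1}^{r_2} v` of a chiral Verma module. -/
def ChiralIndex.vec {c : ℂ} {M : Type u} [AddCommGroup M] [Module ℂ M]
    (A : TopN2 c M) (v : M) (i : ChiralIndex) : M :=
  listApplyN2 A.L i.ls <| listApplyN2 A.H i.hs <| listApplyN2 A.G i.gs <|
    listApplyN2 A.Q i.ps <| ((A.L (-1)) ^ i.k) <|
      condApply (A.G (-1)) i.r1 <| condApply (A.Q (-1)) i.r2 v

/-- A chiral Verma module `V^{GQ}_{0,q,c}` of the topological N=2
superconformal algebra. -/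
structure GQVerma (c q : ℂ) (M : Type u) [AddCommGroup M] [Module ℂ M]
    extends TopN2 c M where
  v : M
  hv0 : L 0 v = 0
  hvH : H 0 v = q • v
  hvG : G 0 v = 0
  hvQ : Q 0 v = 0
  hvann : ∀ k : ℤ, 1 ≤ k → L k v = 0 ∧ H k v = 0 ∧ G k v = 0 ∧ Q k v = 0
  b : Module.Basis ChiralIndex ℂ M
  hb : ∀ i : ChiralIndex, b i = i.vec toTopN2 v


/-! The relations `[L_0, X_{-n}] = n X_{-n}` for `X = L, H, G, Q` make every basis vector of a
chiral Verma module an `L_0`-eigenvector whose eigenvalue is its level, the sum of its mode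
numbers. Every mode occurring in the basis has positive level, so `v` is the only basis vector of
level `0`, and `L_0`, being diagonal in the basis, has kernel `ℂ v`. For (ii), `{G_0, Q_0} = 2 L_0`,
so `G_0 Ψ = Q_0 Ψ = 0` already forces `L_0 Ψ = 0`. -/

namespace Module.Basis

variable {ι R M : Type*} [CommSemiring R] [AddCommMonoid M] [Module R M]

theorem repr_apply_of_apply_eq_smul (b : Basis ι R M) {f : M →ₗ[R] M} {μ : ι → R}
    (hf : ∀ i, f (b i) = μ i • b i) (x : M) (j : ι) :
    b.repr (f x) j = μ j * b.repr x j := by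
  have : Finsupp.lapply j ∘ₗ b.repr.toLinearMap ∘ₗ f =
      μ j • (Finsupp.lapply j ∘ₗ b.repr.toLinearMap) :=
    b.ext fun i => by
      rcases eq_or_ne i j with rfl | hij
      · simp [hf]
      · simp [hf, hij]
  exact LinearMap.congr_fun this x

theorem eq_repr_smul_of_apply_eq_zero [NoZeroDivisors R] (b : Basis ι R M) {f : M →ₗ[R] M}
    {μ : ι → R} (hf : ∀ i, f (b i) = μ i • b i) {i₀ : ι} (hμ : ∀ j ≠ i₀, μ j ≠ 0) {x : M}
    (hx : f x = 0) : x = b.repr x i₀ • b i₀ := by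
  refine b.repr.injective (Finsupp.ext fun j => ?_)
  rcases eq_or_ne j i₀ with rfl | hj
  · simp
  · have hcoord := b.repr_apply_of_apply_eq_smul hf x j
    rw [hx, map_zero, Finsupp.zero_apply, eq_comm, mul_eq_zero] at hcoord
    simp [hj.symm, hcoord.resolve_left (hμ j hj)]

end Module.Basis

section CommutatorShift

variable {R M : Type*} [CommRing R] [AddCommGroup M] [Module R M] {T S : Module.End R M}
  {β lam : R} {w : M}

theorem apply_apply_eq_of_commutator_eq_smul (hc : T * S - S * T = β • S) (hw : T w = lam • w) :
    T (S w) = (lam + β) • S w := by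
  have h := LinearMap.congr_fun hc w
  simp only [LinearMap.sub_apply, Module.End.mul_apply, LinearMap.smul_apply, hw, map_smul] at h
  rw [sub_eq_iff_eq_add] at h
  rw [h, add_smul, add_comm]

theorem apply_pow_apply_eq_of_commutator_eq_self (hc : T * S - S * T = S) (hw : T w = lam • w)
    (k : ℕ) : T ((S ^ k) w) = (lam + k) • (S ^ k) w := by
  induction k with
  | zero => simpa using hw
  | succ k ih =>
    rw [pow_succ', Module.End.mul_apply,
      apply_apply_eq_of_commutator_eq_smul (by rwa [one_smul]) ih]
    push_cast
    ring_nf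

end CommutatorShift

section ListApply

variable {M : Type u} [AddCommGroup M] [Module ℂ M] {T : Module.End ℂ M} {lam : ℂ} {w : M}

theorem apply_listApplyN2_eq_of_commutator {F : ℤ → Module.End ℂ M} {l : List ℕ}
    (hc : ∀ a ∈ l, T * F (-(a : ℤ)) - F (-(a : ℤ)) * T = (a : ℂ) • F (-(a : ℤ)))
    (hw : T w = lam • w) :
    T (listApplyN2 F l w) = (lam + l.sum) • listApplyN2 F l w := by
  induction l with
  | nil => simpa [listApplyN2] using hw
  | cons a l ih =>
    show T (F (-(a : ℤ)) (listApplyN2 F l w)) =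
      (lam + ((a :: l).sum : ℕ)) • F (-(a : ℤ)) (listApplyN2 F l w)
    rw [apply_apply_eq_of_commutator_eq_smul (hc a List.mem_cons_self)
      (ih fun x hx => hc x (List.mem_cons_of_mem _ hx)), List.sum_cons]
    push_cast
    ring_nf

theorem apply_condApply_eq_of_commutator {f : Module.End ℂ M} (hc : T * f - f * T = f)
    (hw : T w = lam • w) (r : Bool) :
    T (condApply f r w) = (lam + r.toNat) • condApply f r w := by
  cases r
  · simpa [condApply] using hw
  · simpa [condApply] using apply_apply_eq_of_commutator_eq_smul (by rwa [one_smul]) hw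

end ListApply

namespace TopN2

variable {c : ℂ} {M : Type u} [AddCommGroup M] [Module ℂ M] (A : TopN2 c M)

theorem L_zero_commutator_L (n : ℤ) :
    A.L 0 * A.L (-n) - A.L (-n) * A.L 0 = (n : ℂ) • A.L (-n) := by
  simp [A.hLL]

theorem L_zero_commutator_H {n : ℤ} (hn : n ≠ 0) :
    A.L 0 * A.H (-n) - A.H (-n) * A.L 0 = (n : ℂ) • A.H (-n) := by
  simp [A.hLH, hn]

theorem L_zero_commutator_G (n : ℤ) :
    A.L 0 * A.G (-n) - A.G (-n) * A.L 0 = (n : ℂ) • A.G (-n) := by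
  simp [A.hLG]

theorem L_zero_commutator_Q (n : ℤ) :
    A.L 0 * A.Q (-n) - A.Q (-n) * A.L 0 = (n : ℂ) • A.Q (-n) := by
  simp [A.hLQ]

theorem L_zero_apply_eq_zero_of_G_zero_of_Q_zero {Ψ : M} (hG : A.G 0 Ψ = 0)
    (hQ : A.Q 0 Ψ = 0) : A.L 0 Ψ = 0 := by
  simpa [hG, hQ] using (LinearMap.congr_fun (A.hGQ 0 0) Ψ).symm

end TopN2

theorem List.eq_nil_of_sum_eq_zero_of_pos {l : List ℕ} (h : l.sum = 0) (hl : ∀ x ∈ l, 0 < x) :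
    l = [] :=
  List.eq_nil_iff_forall_not_mem.2 fun x hx => (hl x hx).ne' (List.sum_eq_zero_iff.1 h x hx)

namespace ChiralIndex

def level (i : ChiralIndex) : ℕ :=
  i.ls.sum + i.hs.sum + i.gs.sum + i.ps.sum + i.k + i.r1.toNat + i.r2.toNat

def vacuum : ChiralIndex where
  ls := []
  hs := []
  gs := []
  ps := []
  k := 0
  r1 := false
  r2 := false
  hls := .nil
  hls2 := by simp
  hhs := .nil
  hhs2 := by simp
  hgs := .nil
  hgs2 := by simp
  hps := .nil
  hps2 := by simp

theorem eq_vacuum_of_level_eq_zero {i : ChiralIndex} (h : i.level = 0) : i = vacuum := by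
  cases i with | mk ls hs gs ps k r1 r2 _ hls _ hhs _ hgs _ hps => ?_
  simp only [level, Nat.add_eq_zero_iff, Bool.toNat_eq_zero] at h
  obtain ⟨⟨⟨⟨⟨⟨hl, hh⟩, hg⟩, hp⟩, rfl⟩, rfl⟩, rfl⟩ := h
  obtain rfl := List.eq_nil_of_sum_eq_zero_of_pos hl fun x hx => by linarith [hls x hx]
  obtain rfl := List.eq_nil_of_sum_eq_zero_of_pos hh hhs
  obtain rfl := List.eq_nil_of_sum_eq_zero_of_pos hg fun x hx => by linarith [hgs x hx]
  obtain rfl := List.eq_nil_of_sum_eq_zero_of_pos hp fun x hx => by linarith [hps x hx]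
  rfl

variable {c : ℂ} {M : Type u} [AddCommGroup M] [Module ℂ M] (A : TopN2 c M)

theorem vec_vacuum (v : M) : vacuum.vec A v = v := by
  simp [vec, vacuum, listApplyN2, condApply]

theorem L_zero_vec {v : M} (hv : A.L 0 v = 0) (i : ChiralIndex) :
    A.L 0 (i.vec A v) = (i.level : ℂ) • i.vec A v := by
  have e₀ : A.L 0 v = (0 : ℂ) • v := by rw [hv, zero_smul]
  have e₁ := apply_condApply_eq_of_commutator (by simpa using A.L_zero_commutator_Q 1) e₀ i.r2
  have e₂ := apply_condApply_eq_of_commutator (by simpa using A.L_zero_commutator_G 1) e₁ i.r1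
  have e₃ := apply_pow_apply_eq_of_commutator_eq_self
    (by simpa using A.L_zero_commutator_L 1) e₂ i.k
  have e₄ := apply_listApplyN2_eq_of_commutator (l := i.ps)
    (fun a _ => by exact_mod_cast A.L_zero_commutator_Q a) e₃
  have e₅ := apply_listApplyN2_eq_of_commutator (l := i.gs)
    (fun a _ => by exact_mod_cast A.L_zero_commutator_G a) e₄
  have e₆ := apply_listApplyN2_eq_of_commutator (l := i.hs)
    (fun a ha => by exact_mod_cast A.L_zero_commutator_H (n := a) (by have := i.hhs2 a ha; omega))
    e₅
  have e₇ := apply_listApplyN2_eq_of_commutator (l := i.ls)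
    (fun a _ => by exact_mod_cast A.L_zero_commutator_L a) e₆
  rw [vec, e₇, level]
  push_cast
  ring_nf

end ChiralIndex

/-- in a chiral Verma module every vector of zero conformal
weight is proportional to the highest weight vector; in particular chiral
Verma modules contain no chiral singular vectors. -/
theorem gqVerma_no_chiral_singular {c q : ℂ} {M : Type u}
    [AddCommGroup M] [Module ℂ M] (V : GQVerma c q M) :
    (∀ Ψ : M, V.L 0 Ψ = 0 → ∃ α : ℂ, Ψ = α • V.v) ∧
    (∀ Ψ : M, (∃ μ : ℂ, V.L 0 Ψ = μ • Ψ) → V.toTopN2.AnnPos Ψ →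
      V.G 0 Ψ = 0 → V.Q 0 Ψ = 0 → ∃ α : ℂ, Ψ = α • V.v) := by
  have basis_eigen : ∀ i, V.L 0 (V.b i) = (i.level : ℂ) • V.b i := fun i => by
    rw [V.hb]
    exact ChiralIndex.L_zero_vec V.toTopN2 V.hv0 i
  have level_ne_zero : ∀ j ≠ ChiralIndex.vacuum, (j.level : ℂ) ≠ 0 := fun j hj =>
    Nat.cast_ne_zero.2 (mt ChiralIndex.eq_vacuum_of_level_eq_zero hj)
  have kernel : ∀ Ψ : M, V.L 0 Ψ = 0 → ∃ α : ℂ, Ψ = α • V.v := fun Ψ hΨ => by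
    have h := V.b.eq_repr_smul_of_apply_eq_zero basis_eigen level_ne_zero hΨ
    rw [V.hb, ChiralIndex.vec_vacuum] at h
    exact ⟨_, h⟩
  exact ⟨kernel, fun Ψ _ _ hG hQ => kernel Ψ (V.L_zero_apply_eq_zero_of_G_zero_of_Q_zero hG hQ)⟩
end

section
/- Let M = V_{0,0,9} be a no-label Verma module with q = 0 and c = 9, and set Ψ₁ = L_{−1}Q_0G_0v and Ψ₂ = H_{−1}Q_0G_0v + Q_{−1}G_0v − 2Q_0G_{−1}v. Then Ψ₁ and Ψ₂ are linearly independent, each has level 1 and charge 0, each is annihilated by the positive operators, and Q_0Ψ₁ = Q_0Ψ₂ = 0; hence Ψ₁ and Ψ₂ span a two-dimensional space of Q_0-closed singular vectors at level 1 and charge 0 in V_{0,0,9}. -/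
universe u

/-- Index of the standard basis of a no-label Verma module of the topological
N=2 algebra. -/
structure NLIndex : Type where
  ls : List ℕ
  hs : List ℕ
  gs : List ℕ
  ps : List ℕ
  k : ℕ
  r1 : Bool
  r2 : Bool
  r3 : Bool
  r4 : Bool
  hls : ls.Pairwise (· ≥ ·)
  hls2 : ∀ x ∈ ls, 2 ≤ x
  hhs : hs.Pairwise (· ≥ ·)
  hhs2 : ∀ x ∈ hs, 1 ≤ x
  hgs : gs.Pairwise (· > ·)
  hgs2 : ∀ x ∈ gs, 2 ≤ x
  hps : ps.Pairwise (· > ·)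
  hps2 : ∀ x ∈ ps, 2 ≤ x

/-- The basis vector
`L_{-l_a}···L_{-l_1} H_{-h_b}···H_{-h_1} G_{-g_d}···G_{-g_1} Q_{-p_e}···Q_{-p_1}
L_{-1}^k G_{-1}^{r_1} Q_{-1}^{r_2} G_0^{r_4} Q_0^{r_3} v` of a no-label Verma
module. -/
def NLIndex.vec {c : ℂ} {M : Type u} [AddCommGroup M] [Module ℂ M]
    (A : TopN2 c M) (v : M) (i : NLIndex) : M :=
  listApplyN2 A.L i.ls <| listApplyN2 A.H i.hs <| listApplyN2 A.G i.gs <|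
    listApplyN2 A.Q i.ps <| ((A.L (-1)) ^ i.k) <|
      condApply (A.G (-1)) i.r1 <| condApply (A.Q (-1)) i.r2 <|
        condApply (A.G 0) i.r4 <| condApply (A.Q 0) i.r3 v

/-- A no-label Verma module `V_{0,q,c}` of the topological N=2 superconformal
algebra. -/
structure NLVerma (c q : ℂ) (M : Type u) [AddCommGroup M] [Module ℂ M]
    extends TopN2 c M where
  v : M
  hv0 : L 0 v = 0
  hvH : H 0 v = q • v
  hvann : ∀ k : ℤ, 1 ≤ k → L k v = 0 ∧ H k v = 0 ∧ G k v = 0 ∧ Q k v = 0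
  b : Module.Basis NLIndex ℂ M
  hb : ∀ i : NLIndex, b i = i.vec toTopN2 v

/-! The vacuum `v` (charge `q = 0`) makes `X = Q₀G₀v` annihilated by every mode of nonnegative
index, so `Ψ₁ = L₋₁X` is singular for every `c`. On `Ψ₂` the modes of index `≥ 2` kill every
term, while `L₁`, `H₁`, `G₁` send `Ψ₂` to `(c/3 - 3)X`, `(c/3 - 3)X`, `2(c/3 - 3)G₀v`; these
vanish exactly at `c = 9`. Level and charge are bookkeeping: `L_n`, `H_n`, `G_n`, `Q_n` shift the
`L₀`-eigenvalue by `-n` and the `H₀`-eigenvalue by `0, 0, 1, -1`. Linear independence is read off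
the coordinates of `Ψ₁` and `Ψ₂` at the basis vectors `L₋₁G₀Q₀v` and `H₋₁G₀Q₀v`. -/

namespace TopN2

variable {c : ℂ} {M : Type u} [AddCommGroup M] [Module ℂ M] (A : TopN2 c M)

theorem L_L_apply (m n : ℤ) (x : M) :
    A.L m (A.L n x) = A.L n (A.L m x) + ((m : ℂ) - n) • A.L (m + n) x :=
  sub_eq_iff_eq_add'.1 (LinearMap.congr_fun (A.hLL m n) x)

theorem L_G_apply (m n : ℤ) (x : M) :
    A.L m (A.G n x) = A.G n (A.L m x) + ((m : ℂ) - n) • A.G (m + n) x :=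
  sub_eq_iff_eq_add'.1 (LinearMap.congr_fun (A.hLG m n) x)

theorem L_Q_apply (m n : ℤ) (x : M) :
    A.L m (A.Q n x) = A.Q n (A.L m x) + (-(n : ℂ)) • A.Q (m + n) x :=
  sub_eq_iff_eq_add'.1 (LinearMap.congr_fun (A.hLQ m n) x)

theorem L_H_apply (m n : ℤ) (x : M) :
    A.L m (A.H n x) = A.H n (A.L m x) + (-(n : ℂ)) • A.H (m + n) x +
      (if m + n = 0 then c / 6 * ((m : ℂ) ^ 2 + m) else 0) • x := by
  rw [add_assoc]
  exact sub_eq_iff_eq_add'.1 (LinearMap.congr_fun (A.hLH m n) x)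

theorem H_H_apply (m n : ℤ) (x : M) :
    A.H m (A.H n x) = A.H n (A.H m x) + (if m + n = 0 then c / 3 * (m : ℂ) else 0) • x :=
  sub_eq_iff_eq_add'.1 (LinearMap.congr_fun (A.hHH m n) x)

theorem H_G_apply (m n : ℤ) (x : M) :
    A.H m (A.G n x) = A.G n (A.H m x) + A.G (m + n) x :=
  sub_eq_iff_eq_add'.1 (LinearMap.congr_fun (A.hHG m n) x)

theorem H_Q_apply (m n : ℤ) (x : M) :
    A.H m (A.Q n x) = A.Q n (A.H m x) - A.Q (m + n) x := by
  rw [sub_eq_add_neg]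
  exact sub_eq_iff_eq_add'.1 (LinearMap.congr_fun (A.hHQ m n) x)

theorem G_Q_apply (m n : ℤ) (x : M) :
    A.G m (A.Q n x) = (2 : ℂ) • A.L (m + n) x + (-2 * (n : ℂ)) • A.H (m + n) x +
      (if m + n = 0 then c / 3 * ((m : ℂ) ^ 2 + m) else 0) • x - A.Q n (A.G m x) :=
  eq_sub_of_add_eq (LinearMap.congr_fun (A.hGQ m n) x)

theorem G_G_apply (m n : ℤ) (x : M) : A.G m (A.G n x) = -A.G n (A.G m x) :=
  eq_neg_of_add_eq_zero_left (LinearMap.congr_fun (A.hGG m n) x)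

theorem Q_Q_apply (m n : ℤ) (x : M) : A.Q m (A.Q n x) = -A.Q n (A.Q m x) :=
  eq_neg_of_add_eq_zero_left (LinearMap.congr_fun (A.hQQ m n) x)

theorem Q_G_apply (m n : ℤ) (x : M) :
    A.Q n (A.G m x) = (2 : ℂ) • A.L (m + n) x + (-2 * (n : ℂ)) • A.H (m + n) x +
      (if m + n = 0 then c / 3 * ((m : ℂ) ^ 2 + m) else 0) • x - A.G m (A.Q n x) := by
  rw [G_Q_apply]; abel

theorem H_L_apply (m n : ℤ) (x : M) :
    A.H n (A.L m x) = A.L m (A.H n x) + (n : ℂ) • A.H (m + n) x -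
      (if m + n = 0 then c / 6 * ((m : ℂ) ^ 2 + m) else 0) • x := by
  rw [L_H_apply, neg_smul]; abel

theorem G_L_apply (m n : ℤ) (x : M) :
    A.G n (A.L m x) = A.L m (A.G n x) - ((m : ℂ) - n) • A.G (m + n) x := by
  rw [L_G_apply]; abel

theorem Q_L_apply (m n : ℤ) (x : M) :
    A.Q n (A.L m x) = A.L m (A.Q n x) + (n : ℂ) • A.Q (m + n) x := by
  rw [L_Q_apply, neg_smul]; abel

theorem G_H_apply (m n : ℤ) (x : M) :
    A.G n (A.H m x) = A.H m (A.G n x) - A.G (m + n) x := by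
  rw [H_G_apply]; abel

theorem Q_H_apply (m n : ℤ) (x : M) :
    A.Q n (A.H m x) = A.H m (A.Q n x) + A.Q (m + n) x := by
  rw [H_Q_apply]; abel

theorem G_G_self (m : ℤ) (x : M) : A.G m (A.G m x) = 0 := by
  have h := A.G_G_apply m m x
  rw [eq_neg_iff_add_eq_zero, ← two_smul ℂ, smul_eq_zero] at h
  exact h.resolve_left two_ne_zero

theorem Q_Q_self (m : ℤ) (x : M) : A.Q m (A.Q m x) = 0 := by
  have h := A.Q_Q_apply m m x
  rw [eq_neg_iff_add_eq_zero, ← two_smul ℂ, smul_eq_zero] at h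
  exact h.resolve_left two_ne_zero

section Grading

variable {x : M} {a : ℂ}

theorem L_zero_L_of_eq_smul (h : A.L 0 x = a • x) (n : ℤ) :
    A.L 0 (A.L n x) = (a - n) • A.L n x := by
  rw [L_L_apply, h, map_smul, zero_add]; module

theorem L_zero_H_of_eq_smul (h : A.L 0 x = a • x) (n : ℤ) :
    A.L 0 (A.H n x) = (a - n) • A.H n x := by
  rw [L_H_apply, h, map_smul, zero_add, Int.cast_zero, zero_pow two_ne_zero, add_zero, mul_zero,
    ite_self, zero_smul, add_zero]
  module

theorem L_zero_G_of_eq_smul (h : A.L 0 x = a • x) (n : ℤ) :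
    A.L 0 (A.G n x) = (a - n) • A.G n x := by
  rw [L_G_apply, h, map_smul, zero_add]; module

theorem L_zero_Q_of_eq_smul (h : A.L 0 x = a • x) (n : ℤ) :
    A.L 0 (A.Q n x) = (a - n) • A.Q n x := by
  rw [L_Q_apply, h, map_smul, zero_add]; module

theorem H_zero_L_of_eq_smul (h : A.H 0 x = a • x) (n : ℤ) :
    A.H 0 (A.L n x) = a • A.L n x := by
  rw [H_L_apply, h, map_smul, add_zero]
  split_ifs with hn
  · simp [hn]
  · simp

theorem H_zero_H_of_eq_smul (h : A.H 0 x = a • x) (n : ℤ) :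
    A.H 0 (A.H n x) = a • A.H n x := by
  rw [H_H_apply, h, map_smul]; simp

theorem H_zero_G_of_eq_smul (h : A.H 0 x = a • x) (n : ℤ) :
    A.H 0 (A.G n x) = (a + 1) • A.G n x := by
  rw [H_G_apply, h, map_smul, zero_add]; module

theorem H_zero_Q_of_eq_smul (h : A.H 0 x = a • x) (n : ℤ) :
    A.H 0 (A.Q n x) = (a - 1) • A.Q n x := by
  rw [H_Q_apply, h, map_smul, zero_add]; module

end Grading

structure IsVacuum (v : M) : Prop where
  L_eq_zero : ∀ k : ℤ, 0 ≤ k → A.L k v = 0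
  H_eq_zero : ∀ k : ℤ, 0 ≤ k → A.H k v = 0
  G_eq_zero : ∀ k : ℤ, 1 ≤ k → A.G k v = 0
  Q_eq_zero : ∀ k : ℤ, 1 ≤ k → A.Q k v = 0

structure AnnNonneg (Ψ : M) : Prop where
  L_eq_zero : ∀ k : ℤ, 0 ≤ k → A.L k Ψ = 0
  H_eq_zero : ∀ k : ℤ, 0 ≤ k → A.H k Ψ = 0
  G_eq_zero : ∀ k : ℤ, 0 ≤ k → A.G k Ψ = 0
  Q_eq_zero : ∀ k : ℤ, 0 ≤ k → A.Q k Ψ = 0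

def psi₂ (v : M) : M :=
  A.H (-1) (A.Q 0 (A.G 0 v)) + A.Q (-1) (A.G 0 v) - (2 : ℂ) • A.Q 0 (A.G (-1) v)

variable {A}

namespace AnnNonneg

variable {Ψ : M} (hΨ : A.AnnNonneg Ψ) {k : ℤ}
include hΨ

theorem annPos_L_neg_one : A.AnnPos (A.L (-1) Ψ) := by
  intro k hk
  refine ⟨?_, ?_, ?_, ?_⟩
  · rw [L_L_apply, hΨ.L_eq_zero k (by omega), hΨ.L_eq_zero _ (by omega), map_zero, smul_zero,
      add_zero]
  · rw [H_L_apply, hΨ.H_eq_zero k (by omega), hΨ.H_eq_zero _ (by omega), map_zero, smul_zero,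
      add_zero]
    simp
  · rw [G_L_apply, hΨ.G_eq_zero k (by omega), hΨ.G_eq_zero _ (by omega), map_zero, smul_zero,
      sub_zero]
  · rw [Q_L_apply, hΨ.Q_eq_zero k (by omega), hΨ.Q_eq_zero _ (by omega), map_zero, smul_zero,
      add_zero]

theorem Q_zero_L_neg_one : A.Q 0 (A.L (-1) Ψ) = 0 := by
  rw [Q_L_apply, hΨ.Q_eq_zero 0 le_rfl, map_zero, Int.cast_zero, zero_smul, add_zero]

theorem L_H_neg_one (hk : 1 ≤ k) :
    A.L k (A.H (-1) Ψ) = (if k = 1 then c / 3 else 0) • Ψ := by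
  rw [L_H_apply, hΨ.L_eq_zero k (by omega), hΨ.H_eq_zero _ (by omega), map_zero, smul_zero,
    zero_add, zero_add]
  rcases (show k = 1 ∨ 2 ≤ k by omega) with rfl | hk2
  · norm_num; ring_nf
  · rw [if_neg (by omega), if_neg (by omega)]

theorem H_H_neg_one (hk : 1 ≤ k) :
    A.H k (A.H (-1) Ψ) = (if k = 1 then c / 3 else 0) • Ψ := by
  rw [H_H_apply, hΨ.H_eq_zero k (by omega), map_zero, zero_add]
  rcases (show k = 1 ∨ 2 ≤ k by omega) with rfl | hk2
  · norm_num
  · rw [if_neg (by omega), if_neg (by omega)]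

theorem G_H_neg_one (hk : 1 ≤ k) : A.G k (A.H (-1) Ψ) = 0 := by
  rw [G_H_apply, hΨ.G_eq_zero k (by omega), hΨ.G_eq_zero _ (by omega), map_zero, sub_zero]

theorem Q_H_neg_one (hk : 0 ≤ k) : A.Q k (A.H (-1) Ψ) = A.Q (k - 1) Ψ := by
  rw [Q_H_apply, hΨ.Q_eq_zero k hk, map_zero, zero_add, add_comm, ← sub_eq_add_neg]

end AnnNonneg

namespace IsVacuum

variable {v : M} (hv : A.IsVacuum v) {k : ℤ}
include hv

theorem L_G_zero (hk : 0 ≤ k) : A.L k (A.G 0 v) = 0 := by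
  rw [L_G_apply, hv.L_eq_zero k hk, map_zero, zero_add]
  rcases hk.eq_or_lt with rfl | hk
  · simp
  · rw [hv.G_eq_zero _ (by omega), smul_zero]

theorem H_zero_G_zero : A.H 0 (A.G 0 v) = A.G 0 v := by
  rw [H_G_apply, hv.H_eq_zero 0 le_rfl, map_zero, zero_add, add_zero]

theorem H_G_zero (hk : 1 ≤ k) : A.H k (A.G 0 v) = 0 := by
  rw [H_G_apply, hv.H_eq_zero k (by omega), map_zero, zero_add, add_zero, hv.G_eq_zero k hk]

theorem G_G_zero (hk : 0 ≤ k) : A.G k (A.G 0 v) = 0 := by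
  rcases hk.eq_or_lt with rfl | hk
  · exact A.G_G_self 0 v
  · rw [G_G_apply, hv.G_eq_zero k hk, map_zero, neg_zero]

theorem Q_G_zero (hk : 1 ≤ k) : A.Q k (A.G 0 v) = 0 := by
  rw [Q_G_apply, hv.Q_eq_zero k hk, hv.L_eq_zero _ (by omega), hv.H_eq_zero _ (by omega),
    if_neg (by omega)]
  simp

theorem L_G_neg_one (hk : 0 ≤ k) : A.L k (A.G (-1) v) = ((k : ℂ) + 1) • A.G (k - 1) v := by
  rw [L_G_apply, hv.L_eq_zero k hk, map_zero, zero_add, ← sub_eq_add_neg]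
  push_cast; ring_nf

theorem H_G_neg_one (hk : 0 ≤ k) : A.H k (A.G (-1) v) = A.G (k - 1) v := by
  rw [H_G_apply, hv.H_eq_zero k hk, map_zero, zero_add, sub_eq_add_neg]

theorem G_G_neg_one (hk : 1 ≤ k) : A.G k (A.G (-1) v) = 0 := by
  rw [G_G_apply, hv.G_eq_zero k hk, map_zero, neg_zero]

theorem Q_G_neg_one (hk : 1 ≤ k) : A.Q k (A.G (-1) v) = 0 := by
  rw [Q_G_apply, hv.Q_eq_zero k hk, hv.L_eq_zero _ (by omega), hv.H_eq_zero _ (by omega)]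
  simp

theorem annNonneg_Q_zero_G_zero : A.AnnNonneg (A.Q 0 (A.G 0 v)) where
  L_eq_zero k hk := by
    rw [L_Q_apply, hv.L_G_zero hk, map_zero, zero_add, Int.cast_zero, neg_zero, zero_smul]
  H_eq_zero k hk := by
    rw [H_Q_apply]
    rcases hk.eq_or_lt with rfl | hk
    · rw [hv.H_zero_G_zero, zero_add, sub_self]
    · rw [hv.H_G_zero hk, map_zero, zero_sub, add_zero, hv.Q_G_zero hk, neg_zero]
  G_eq_zero k hk := by
    rw [G_Q_apply, hv.G_G_zero hk, map_zero, sub_zero, add_zero, hv.L_G_zero hk]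
    split_ifs with h <;> simp [h]
  Q_eq_zero k hk := by
    rcases hk.eq_or_lt with rfl | hk
    · exact A.Q_Q_self 0 _
    · rw [Q_Q_apply, hv.Q_G_zero hk, map_zero, neg_zero]

theorem L_psi₂ (hk : 1 ≤ k) :
    A.L k (A.psi₂ v) = (if k = 1 then c / 3 - 3 else 0) • A.Q 0 (A.G 0 v) := by
  have hT₂ : A.L k (A.Q (-1) (A.G 0 v)) = A.Q (k - 1) (A.G 0 v) := by
    rw [L_Q_apply, hv.L_G_zero (by omega), map_zero, zero_add, ← sub_eq_add_neg]
    simp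
  have hT₃ : A.L k (A.Q 0 (A.G (-1) v)) = ((k : ℂ) + 1) • A.Q 0 (A.G (k - 1) v) := by
    rw [L_Q_apply, hv.L_G_neg_one (by omega)]
    simp
  rw [psi₂, map_sub, map_add, map_smul, hv.annNonneg_Q_zero_G_zero.L_H_neg_one hk, hT₂, hT₃]
  rcases (show k = 1 ∨ 2 ≤ k by omega) with rfl | hk2
  · norm_num; module
  · rw [hv.Q_G_zero (k := k - 1) (by omega), hv.G_eq_zero (k - 1) (by omega), if_neg (by omega),
      if_neg (by omega)]
    simp

theorem H_psi₂ (hk : 1 ≤ k) :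
    A.H k (A.psi₂ v) = (if k = 1 then c / 3 - 3 else 0) • A.Q 0 (A.G 0 v) := by
  have hT₂ : A.H k (A.Q (-1) (A.G 0 v)) = -A.Q (k - 1) (A.G 0 v) := by
    rw [H_Q_apply, hv.H_G_zero hk, map_zero, zero_sub, ← sub_eq_add_neg]
  have hT₃ : A.H k (A.Q 0 (A.G (-1) v)) = A.Q 0 (A.G (k - 1) v) := by
    rw [H_Q_apply, hv.H_G_neg_one (by omega), add_zero, hv.Q_G_neg_one hk, sub_zero]
  rw [psi₂, map_sub, map_add, map_smul, hv.annNonneg_Q_zero_G_zero.H_H_neg_one hk, hT₂, hT₃]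
  rcases (show k = 1 ∨ 2 ≤ k by omega) with rfl | hk2
  · norm_num; module
  · rw [hv.Q_G_zero (k := k - 1) (by omega), hv.G_eq_zero (k - 1) (by omega), if_neg (by omega),
      if_neg (by omega)]
    simp

theorem G_psi₂ (hk : 1 ≤ k) :
    A.G k (A.psi₂ v) = (if k = 1 then 2 * (c / 3 - 3) else 0) • A.G 0 v := by
  have hT₂ : A.G k (A.Q (-1) (A.G 0 v)) =
      (2 : ℂ) • A.H (k - 1) (A.G 0 v) + (if k = 1 then 2 * c / 3 else 0) • A.G 0 v := by
    rw [G_Q_apply, hv.G_G_zero (by omega), map_zero, sub_zero, ← sub_eq_add_neg,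
      hv.L_G_zero (by omega), smul_zero, zero_add]
    rcases (show k = 1 ∨ 2 ≤ k by omega) with rfl | hk2
    · norm_num; ring_nf
    · rw [if_neg (by omega), if_neg (by omega)]
      norm_num
  have hT₃ : A.G k (A.Q 0 (A.G (-1) v)) = (2 * ((k : ℂ) + 1)) • A.G (k - 1) v := by
    rw [G_Q_apply, hv.G_G_neg_one hk, map_zero, sub_zero, add_zero, hv.L_G_neg_one (by omega),
      if_neg (by omega)]
    simp [smul_smul]
  rw [psi₂, map_sub, map_add, map_smul, hv.annNonneg_Q_zero_G_zero.G_H_neg_one hk, hT₂, hT₃]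
  rcases (show k = 1 ∨ 2 ≤ k by omega) with rfl | hk2
  · norm_num
    rw [hv.H_zero_G_zero]
    module
  · rw [hv.H_G_zero (by omega), hv.G_eq_zero (k - 1) (by omega), if_neg (by omega),
      if_neg (by omega)]
    simp

theorem Q_psi₂ (hk : 0 ≤ k) : A.Q k (A.psi₂ v) = 0 := by
  have hX := hv.annNonneg_Q_zero_G_zero
  rw [psi₂, map_sub, map_add, map_smul, hX.Q_H_neg_one hk, A.Q_Q_apply k (-1), A.Q_Q_apply k 0]
  rcases hk.eq_or_lt with rfl | hk
  · rw [A.Q_Q_self 0, neg_zero, smul_zero, sub_zero, zero_sub, add_neg_cancel]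
  · rw [hX.Q_eq_zero (k - 1) (by omega), hv.Q_G_zero hk, hv.Q_G_neg_one hk]
    simp

theorem L_zero_psi₂ : A.L 0 (A.psi₂ v) = A.psi₂ v := by
  have hv₀ : A.L 0 v = (0 : ℂ) • v := by rw [hv.L_eq_zero 0 le_rfl, zero_smul]
  have hG₀ := A.L_zero_G_of_eq_smul hv₀
  rw [psi₂, map_sub, map_add, map_smul,
    A.L_zero_H_of_eq_smul (A.L_zero_Q_of_eq_smul (hG₀ 0) 0) (-1),
    A.L_zero_Q_of_eq_smul (hG₀ 0) (-1), A.L_zero_Q_of_eq_smul (hG₀ (-1)) 0]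
  norm_num

theorem H_zero_psi₂ : A.H 0 (A.psi₂ v) = 0 := by
  have hv₀ : A.H 0 v = (0 : ℂ) • v := by rw [hv.H_eq_zero 0 le_rfl, zero_smul]
  have hG₀ := A.H_zero_G_of_eq_smul hv₀
  rw [psi₂, map_sub, map_add, map_smul,
    A.H_zero_H_of_eq_smul (A.H_zero_Q_of_eq_smul (hG₀ 0) 0) (-1),
    A.H_zero_Q_of_eq_smul (hG₀ 0) (-1), A.H_zero_Q_of_eq_smul (hG₀ (-1)) 0]
  norm_num

theorem annPos_psi₂ (hc : c = 9) : A.AnnPos (A.psi₂ v) := by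
  intro k hk
  subst hc
  refine ⟨?_, ?_, ?_, hv.Q_psi₂ (by omega)⟩
  · rw [hv.L_psi₂ hk]; norm_num
  · rw [hv.H_psi₂ hk]; norm_num
  · rw [hv.G_psi₂ hk]; norm_num

end IsVacuum

end TopN2

-- The basis index of `H_{-hs} L_{-1}^k G_{-1}^{r1} Q_{-1}^{r2} G_0^{r4} Q_0^{r3} v`.
def NLIndex.ofLow (hs : List ℕ) (k : ℕ) (r1 r2 r3 r4 : Bool)
    (hhs : hs.Pairwise (· ≥ ·) := by simp) (hhs2 : ∀ x ∈ hs, 1 ≤ x := by simp) : NLIndex :=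
  ⟨[], hs, [], [], k, r1, r2, r3, r4, by simp, by simp, hhs, hhs2, by simp, by simp, by simp,
    by simp⟩

namespace NLVerma

open TopN2

variable {c q : ℂ} {M : Type u} [AddCommGroup M] [Module ℂ M]

theorem isVacuum (V : NLVerma c 0 M) : V.toTopN2.IsVacuum V.v where
  L_eq_zero k hk := by
    rcases hk.eq_or_lt with rfl | hk
    · exact V.hv0
    · exact (V.hvann k hk).1
  H_eq_zero k hk := by
    rcases hk.eq_or_lt with rfl | hk
    · rw [V.hvH, zero_smul]
    · exact (V.hvann k hk).2.1
  G_eq_zero k hk := (V.hvann k hk).2.2.1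
  Q_eq_zero k hk := (V.hvann k hk).2.2.2

variable (V : NLVerma c q M)

theorem L_neg_one_Q_zero_G_zero_eq_basis :
    V.L (-1) (V.Q 0 (V.G 0 V.v)) = -V.b (.ofLow [] 1 false false true true) := by
  rw [V.hb, Q_G_apply _ 0 0]
  simp [V.hv0, NLIndex.vec, NLIndex.ofLow, listApplyN2, condApply]

theorem psi₂_eq_basis :
    V.toTopN2.psi₂ V.v = -V.b (.ofLow [1] 0 false false true true) +
      V.b (.ofLow [] 0 false true false true) -
      (2 : ℂ) • ((2 : ℂ) • V.b (.ofLow [] 1 false false false false) -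
        V.b (.ofLow [] 0 true false true false)) := by
  rw [psi₂, Q_G_apply _ 0 0, Q_G_apply _ (-1) 0]
  simp [V.hv0, V.hb, NLIndex.vec, NLIndex.ofLow, listApplyN2, condApply]

theorem linearIndependent_psi₁_psi₂ :
    LinearIndependent ℂ ![V.L (-1) (V.Q 0 (V.G 0 V.v)), V.toTopN2.psi₂ V.v] := by
  rw [LinearIndependent.pair_iff]
  intro s t h
  rw [L_neg_one_Q_zero_G_zero_eq_basis, psi₂_eq_basis] at h
  have h₀ := congrArg (V.b.coord (.ofLow [] 1 false false true true)) h
  have h₁ := congrArg (V.b.coord (.ofLow [1] 0 false false true true)) h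
  simp [NLIndex.ofLow] at h₀ h₁
  exact ⟨h₀, h₁⟩

end NLVerma

theorem rank_span_pair {R N : Type*} [Ring R] [StrongRankCondition R] [AddCommGroup N]
    [Module R N] {x y : N} (h : LinearIndependent R ![x, y]) :
    Module.rank R (Submodule.span R {x, y}) = 2 := by
  have := nontrivial_of_invariantBasisNumber R
  rw [← Matrix.range_cons_cons_empty x y ![], rank_span h]
  simpa using Cardinal.mk_range_eq_of_injective h.injective

/-- in the no-label Verma module `V_{0,0,9}` the vectors
`Ψ₁ = L_{-1}Q₀G₀v` and `Ψ₂ = H_{-1}Q₀G₀v + Q_{-1}G₀v - 2Q₀G_{-1}v` span a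
two-dimensional space of `Q₀`-closed singular vectors at level 1 and
charge 0. -/
theorem nlVerma_level_one_two_dimensional {M : Type u}
    [AddCommGroup M] [Module ℂ M] (V : NLVerma 9 0 M) :
    LinearIndependent ℂ
      ![V.L (-1) (V.Q 0 (V.G 0 V.v)),
        V.H (-1) (V.Q 0 (V.G 0 V.v)) + V.Q (-1) (V.G 0 V.v) -
          (2 : ℂ) • V.Q 0 (V.G (-1) V.v)] ∧
    V.L 0 (V.L (-1) (V.Q 0 (V.G 0 V.v))) = (1 : ℂ) • V.L (-1) (V.Q 0 (V.G 0 V.v)) ∧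
    V.H 0 (V.L (-1) (V.Q 0 (V.G 0 V.v))) = (0 : ℂ) • V.L (-1) (V.Q 0 (V.G 0 V.v)) ∧
    V.toTopN2.AnnPos (V.L (-1) (V.Q 0 (V.G 0 V.v))) ∧
    V.Q 0 (V.L (-1) (V.Q 0 (V.G 0 V.v))) = 0 ∧
    V.L 0 (V.H (-1) (V.Q 0 (V.G 0 V.v)) + V.Q (-1) (V.G 0 V.v) -
        (2 : ℂ) • V.Q 0 (V.G (-1) V.v)) =
      (1 : ℂ) • (V.H (-1) (V.Q 0 (V.G 0 V.v)) + V.Q (-1) (V.G 0 V.v) -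
        (2 : ℂ) • V.Q 0 (V.G (-1) V.v)) ∧
    V.H 0 (V.H (-1) (V.Q 0 (V.G 0 V.v)) + V.Q (-1) (V.G 0 V.v) -
        (2 : ℂ) • V.Q 0 (V.G (-1) V.v)) =
      (0 : ℂ) • (V.H (-1) (V.Q 0 (V.G 0 V.v)) + V.Q (-1) (V.G 0 V.v) -
        (2 : ℂ) • V.Q 0 (V.G (-1) V.v)) ∧
    V.toTopN2.AnnPos (V.H (-1) (V.Q 0 (V.G 0 V.v)) + V.Q (-1) (V.G 0 V.v) -
        (2 : ℂ) • V.Q 0 (V.G (-1) V.v)) ∧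
    V.Q 0 (V.H (-1) (V.Q 0 (V.G 0 V.v)) + V.Q (-1) (V.G 0 V.v) -
        (2 : ℂ) • V.Q 0 (V.G (-1) V.v)) = 0 ∧
    Module.rank ℂ
      ↥(Submodule.span ℂ
        {V.L (-1) (V.Q 0 (V.G 0 V.v)),
         V.H (-1) (V.Q 0 (V.G 0 V.v)) + V.Q (-1) (V.G 0 V.v) -
           (2 : ℂ) • V.Q 0 (V.G (-1) V.v)}) = 2 := by
  have hv := V.isVacuum
  have hX := hv.annNonneg_Q_zero_G_zero
  have hXL₀ : V.L 0 (V.Q 0 (V.G 0 V.v)) = (0 : ℂ) • V.Q 0 (V.G 0 V.v) := by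
    rw [hX.L_eq_zero 0 le_rfl, zero_smul]
  have hXH₀ : V.H 0 (V.Q 0 (V.G 0 V.v)) = (0 : ℂ) • V.Q 0 (V.G 0 V.v) := by
    rw [hX.H_eq_zero 0 le_rfl, zero_smul]
  refine ⟨V.linearIndependent_psi₁_psi₂, ?_, ?_, hX.annPos_L_neg_one, hX.Q_zero_L_neg_one, ?_, ?_,
    hv.annPos_psi₂ rfl, hv.Q_psi₂ le_rfl, rank_span_pair V.linearIndependent_psi₁_psi₂⟩
  · rw [V.L_zero_L_of_eq_smul hXL₀]; norm_num
  · exact V.H_zero_L_of_eq_smul hXH₀ (-1)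
  · rw [one_smul]; exact hv.L_zero_psi₂
  · rw [zero_smul]; exact hv.H_zero_psi₂
end
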